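/- arXiv:2512.20878 — 7 statements merged into one kernel-verified Lean document; each statement's English description precedes it below -/
import Mathlib

section
/- For every integer n ≥ 7 that can be written as n = 5p + 9q with p and q nonnegative integers, the total chromatic number of the circulant graph C_n(1,3) equals 5. -/
/-- The circulant graph `C_n(1,3)`: vertices are `ZMod n`, and `i` is adjacent to `j`
iff `i - j ≡ ±1` or `±3 (mod n)`. -/
def circulantGraph (n : ℕ) : SimpleGraph (ZMod n) :=
  SimpleGraph.fromRel (fun i j => j - i = 1 ∨ j - i = 3)

/-- `vc` (on vertices) and `ec` (on edges) form a total `k`-colouring of `G`: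
adjacent vertices get distinct colours, adjacent (distinct, incident) edges get distinct
colours, and each vertex gets a colour distinct from those of its incident edges. -/
def IsTotalColoring {V : Type*} (G : SimpleGraph V) (k : ℕ)
    (vc : V → Fin k) (ec : Sym2 V → Fin k) : Prop :=
  (∀ v w : V, G.Adj v w → vc v ≠ vc w) ∧
  (∀ e₁ ∈ G.edgeSet, ∀ e₂ ∈ G.edgeSet, e₁ ≠ e₂ → (∃ v, v ∈ e₁ ∧ v ∈ e₂) → ec e₁ ≠ ec e₂) ∧
  (∀ v : V, ∀ e ∈ G.edgeSet, v ∈ e → vc v ≠ ec e)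

/-- `G` has a total `k`-colouring. -/
def HasTotalColoring {V : Type*} (G : SimpleGraph V) (k : ℕ) : Prop :=
  ∃ vc ec, IsTotalColoring G k vc ec

/-- The total chromatic number of `G`: the least `k` admitting a total `k`-colouring. -/
noncomputable def totalChromaticNumber {V : Type*} (G : SimpleGraph V) : ℕ :=
  sInf {k : ℕ | HasTotalColoring G k}

/- ### Auxiliary machinery for the explicit total 5-colouring -/

abbrev TCCol := Fin 5 × Fin 5 × Fin 5

/-- Pattern block of length 5 (used `p` times): column `r` colours vertex (first
component), the edge `{i, i+1}` (second) and the edge `{i, i+3}` (third). -/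
def TCA : ℕ → TCCol
  | 0 => (0,3,4) | 1 => (1,4,0) | 2 => (2,0,1) | 3 => (3,1,2) | _ => (4,2,3)

/-- Pattern block of length 9 (used `q` times). -/
def TCB : ℕ → TCCol
  | 0 => (3,0,4) | 1 => (1,4,3) | 2 => (0,2,1) | 3 => (1,0,3) | 4 => (4,2,1)
  | 5 => (3,4,0) | 6 => (2,0,1) | 7 => (3,4,2) | _ => (1,2,3)

/-- The global pattern: positions `< 5p` use the 5-blocks, the rest the 9-blocks. -/
def tcPat (p i : ℕ) : TCCol := if i < 5*p then TCA (i % 5) else TCB ((i - 5*p) % 9)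

/-- `x` = column at `i`, `y` = column at `i-1`, `z` = column at `i-3`.
The five colours around vertex `i` are `x.1` (the vertex), `y.2.1, x.2.1`
(the two `±1` edges) and `z.2.2, x.2.2` (the two `±3` edges); all must be distinct,
and the vertex colour must also differ from the colours of the neighbouring vertices. -/
def TCGood (x y z : TCCol) : Prop :=
  x.1 ≠ y.1 ∧ x.1 ≠ z.1 ∧
  x.1 ≠ y.2.1 ∧ x.1 ≠ x.2.1 ∧ x.1 ≠ z.2.2 ∧ x.1 ≠ x.2.2 ∧
  y.2.1 ≠ x.2.1 ∧ y.2.1 ≠ z.2.2 ∧ y.2.1 ≠ x.2.2 ∧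
  x.2.1 ≠ z.2.2 ∧ x.2.1 ≠ x.2.2 ∧
  z.2.2 ≠ x.2.2

instance (x y z : TCCol) : Decidable (TCGood x y z) := by unfold TCGood; infer_instance

lemma tc_checkA : ∀ r : ℕ, r < 5 → TCGood (TCA r) (TCA ((r+4)%5)) (TCA ((r+2)%5)) := by
  intro r hr; interval_cases r <;> decide

lemma tc_checkB3 : ∀ r : ℕ, 3 ≤ r → r < 9 → TCGood (TCB r) (TCB (r-1)) (TCB (r-3)) := by
  intro r h1 h2; interval_cases r <;> decide

lemma tc_checkBlow : ∀ r : ℕ, r < 3 → TCGood (TCB r) (TCB ((r+8)%9)) (TCB (r+6)) := by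
  intro r hr; interval_cases r <;> decide

lemma tcPatA (p i r : ℕ) (h : i < 5*p) (hr : i % 5 = r) : tcPat p i = TCA r := by
  simp only [tcPat]; rw [if_pos h, hr]

lemma tcPatB (p i r : ℕ) (h : ¬ i < 5*p) (hr : (i - 5*p) % 9 = r) : tcPat p i = TCB r := by
  simp only [tcPat]; rw [if_neg h, hr]

/-- The key combinatorial fact: at every position of the cycle the local colours
around that vertex are as required. -/
lemma tc_key (p q n i : ℕ) (hn : 7 ≤ n) (hpq : n = 5*p + 9*q) (hi : i < n) :
    TCGood (tcPat p i) (tcPat p ((i + (n-1)) % n)) (tcPat p ((i + (n-3)) % n)) := by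
  have hj1 : (i + (n-1)) % n = if 1 ≤ i then i - 1 else n - 1 := by
    split
    · have h : i + (n-1) = (i - 1) + 1 * n := by omega
      rw [h, Nat.add_mul_mod_self_right, Nat.mod_eq_of_lt (by omega)]
    · have h : i + (n-1) = n - 1 := by omega
      rw [h, Nat.mod_eq_of_lt (by omega)]
  have hj3 : (i + (n-3)) % n = if 3 ≤ i then i - 3 else n - 3 + i := by
    split
    · have h : i + (n-3) = (i - 3) + 1 * n := by omega
      rw [h, Nat.add_mul_mod_self_right, Nat.mod_eq_of_lt (by omega)]
    · have h : i + (n-3) = n - 3 + i := by omega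
      rw [h, Nat.mod_eq_of_lt (by omega)]
  rw [hj1, hj3]
  by_cases hA : i < 5*p
  · rw [tcPatA p i (i % 5) hA rfl]
    by_cases h3 : 3 ≤ i
    · rw [if_pos (by omega : 1 ≤ i), if_pos h3,
        tcPatA p (i-1) ((i%5+4)%5) (by omega) (by omega),
        tcPatA p (i-3) ((i%5+2)%5) (by omega) (by omega)]
      exact tc_checkA _ (by omega)
    · rw [if_neg h3]
      by_cases hq : q = 0
      · subst hq
        have hp1 : tcPat p (if 1 ≤ i then i - 1 else n - 1) = TCA ((i%5+4)%5) := by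
          split
          · exact tcPatA p (i-1) _ (by omega) (by omega)
          · exact tcPatA p (n-1) _ (by omega) (by omega)
        rw [hp1, tcPatA p (n-3+i) ((i%5+2)%5) (by omega) (by omega)]
        exact tc_checkA _ (by omega)
      · interval_cases i
        · rw [if_neg (by omega), tcPatB p (n-1) 8 (by omega) (by omega),
            tcPatB p (n-3+0) 6 (by omega) (by omega)]
          decide
        · rw [if_pos (by omega), tcPatA p 0 0 (by omega) (by omega),
            tcPatB p (n-3+1) 7 (by omega) (by omega)]
          decide
        · rw [if_pos (by omega), tcPatA p 1 1 (by omega) (by omega),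
            tcPatB p (n-3+2) 8 (by omega) (by omega)]
          decide
  · obtain ⟨s, rfl⟩ : ∃ s, i = 5*p + s := ⟨i - 5*p, by omega⟩
    rw [tcPatB p (5*p+s) (s % 9) hA (by omega)]
    by_cases hr3 : 3 ≤ s % 9
    · rw [if_pos (by omega : 1 ≤ 5*p+s), if_pos (by omega : 3 ≤ 5*p+s),
        tcPatB p (5*p+s-1) (s%9 - 1) (by omega) (by omega),
        tcPatB p (5*p+s-3) (s%9 - 3) (by omega) (by omega)]
      exact tc_checkB3 _ hr3 (by omega)
    · by_cases hs9 : 9 ≤ s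
      · rw [if_pos (by omega), if_pos (by omega),
          tcPatB p (5*p+s-1) ((s%9+8)%9) (by omega) (by omega),
          tcPatB p (5*p+s-3) (s%9+6) (by omega) (by omega)]
        exact tc_checkBlow _ (by omega)
      · have hs3 : s < 3 := by omega
        rcases Nat.eq_zero_or_pos p with hp | hp
        · subst hp
          interval_cases s
          · rw [if_neg (by omega), if_neg (by omega),
              tcPatB 0 (n-1) 8 (by omega) (by omega),
              tcPatB 0 (n-3+(5*0+0)) 6 (by omega) (by omega)]
            decide
          · rw [if_pos (by omega), if_neg (by omega),
              tcPatB 0 (5*0+1-1) 0 (by omega) (by omega),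
              tcPatB 0 (n-3+(5*0+1)) 7 (by omega) (by omega)]
            decide
          · rw [if_pos (by omega), if_neg (by omega),
              tcPatB 0 (5*0+2-1) 1 (by omega) (by omega),
              tcPatB 0 (n-3+(5*0+2)) 8 (by omega) (by omega)]
            decide
        · interval_cases s
          · rw [if_pos (by omega), if_pos (by omega),
              tcPatA p (5*p+0-1) 4 (by omega) (by omega),
              tcPatA p (5*p+0-3) 2 (by omega) (by omega)]
            decide
          · rw [if_pos (by omega), if_pos (by omega),
              tcPatB p (5*p+1-1) 0 (by omega) (by omega),
              tcPatA p (5*p+1-3) 3 (by omega) (by omega)]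
            decide
          · rw [if_pos (by omega), if_pos (by omega),
              tcPatB p (5*p+2-1) 1 (by omega) (by omega),
              tcPatA p (5*p+2-3) 4 (by omega) (by omega)]
            decide

/- ### From the pattern to colourings of `ZMod n` -/

def tcB' (p : ℕ) {n : ℕ} (v : ZMod n) : Fin 5 := (tcPat p v.val).2.1
def tcC' (p : ℕ) {n : ℕ} (v : ZMod n) : Fin 5 := (tcPat p v.val).2.2

/-- The edge-colouring function on ordered pairs. -/
def tcEcf (p : ℕ) {n : ℕ} (v w : ZMod n) : Fin 5 :=
  if w - v = 1 then tcB' p v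
  else if v - w = 1 then tcB' p w
  else if w - v = 3 then tcC' p v
  else if v - w = 3 then tcC' p w
  else 0

section
variable {n : ℕ}

lemma tc_castn_ne_zero (hn : 7 ≤ n) {c : ℕ} (h1 : 0 < c) (h2 : c < n) :
    ((c : ℕ) : ZMod n) ≠ 0 := by
  haveI : NeZero n := ⟨by omega⟩
  rw [Ne, ZMod.natCast_eq_zero_iff]
  intro h
  exact absurd (Nat.le_of_dvd h1 h) (by omega)

lemma tc_two_ne (hn : 7 ≤ n) : (2 : ZMod n) ≠ 0 := by
  have := tc_castn_ne_zero hn (n := n) (c := 2) (by norm_num) (by omega)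
  exact_mod_cast this

lemma tc_four_ne (hn : 7 ≤ n) : (4 : ZMod n) ≠ 0 := by
  have := tc_castn_ne_zero hn (n := n) (c := 4) (by norm_num) (by omega)
  exact_mod_cast this

lemma tc_six_ne (hn : 7 ≤ n) : (6 : ZMod n) ≠ 0 := by
  have := tc_castn_ne_zero hn (n := n) (c := 6) (by norm_num) (by omega)
  exact_mod_cast this

lemma tcEcf_symm (hn : 7 ≤ n) (p : ℕ) (v w : ZMod n) : tcEcf p v w = tcEcf p w v := by
  have h2 := tc_two_ne hn
  have h4 := tc_four_ne hn
  have h6 := tc_six_ne hn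
  unfold tcEcf
  by_cases a1 : w - v = 1
  · have a2 : ¬(v - w = 1) := fun h => h2 (by linear_combination -a1 - h)
    have a3 : ¬(w - v = 3) := fun h => h2 (by linear_combination a1 - h)
    have a4 : ¬(v - w = 3) := fun h => h4 (by linear_combination -a1 - h)
    simp [a1, a2, a3, a4]
  · by_cases a2 : v - w = 1
    · have a3 : ¬(w - v = 3) := fun h => h4 (by linear_combination -a2 - h)
      have a4 : ¬(v - w = 3) := fun h => h2 (by linear_combination a2 - h)
      simp [a1, a2, a3, a4]
    · by_cases a3 : w - v = 3
      · have a4 : ¬(v - w = 3) := fun h => h6 (by linear_combination -a3 - h)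
        simp [a1, a2, a3, a4]
      · by_cases a4 : v - w = 3 <;> simp [a1, a2, a3, a4]

lemma tcEcf_eval1 (p : ℕ) (x : ZMod n) : tcEcf p x (x+1) = tcB' p x := by
  unfold tcEcf; rw [if_pos (by ring)]

lemma tcEcf_eval2 (p : ℕ) (x : ZMod n) : tcEcf p (x-1) x = tcB' p (x-1) := by
  unfold tcEcf; rw [if_pos (by ring)]

lemma tcEcf_eval3 (hn : 7 ≤ n) (p : ℕ) (x : ZMod n) : tcEcf p x (x+3) = tcC' p x := by
  unfold tcEcf
  rw [if_neg (fun h => tc_two_ne hn (by linear_combination h)),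
    if_neg (fun h => tc_four_ne hn (by linear_combination -h)),
    if_pos (by ring)]

lemma tcEcf_eval4 (hn : 7 ≤ n) (p : ℕ) (x : ZMod n) : tcEcf p (x-3) x = tcC' p (x-3) := by
  unfold tcEcf
  rw [if_neg (fun h => tc_two_ne hn (by linear_combination h)),
    if_neg (fun h => tc_four_ne hn (by linear_combination -h)),
    if_pos (by ring)]

lemma tc_sub_val (hn : 7 ≤ n) (x : ZMod n) (k : ℕ) (hk0 : 0 < k) (hk : k < n) :
    (x - (k : ZMod n)).val = (x.val + (n - k)) % n := by
  haveI : NeZero n := ⟨by omega⟩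
  have h1 : x - (k : ZMod n) = x + ((n - k : ℕ) : ZMod n) := by
    have h2 : ((n - k : ℕ) : ZMod n) = -(k : ZMod n) := by
      rw [Nat.cast_sub hk.le, ZMod.natCast_self, zero_sub]
    rw [h2, sub_eq_add_neg]
  rw [h1, ZMod.val_add, ZMod.val_natCast, Nat.mod_eq_of_lt (show n - k < n by omega)]

lemma tc_val_sub_one (hn : 7 ≤ n) (x : ZMod n) : (x - 1).val = (x.val + (n-1)) % n := by
  have := tc_sub_val hn x 1 (by omega) (by omega)
  rwa [Nat.cast_one] at this

lemma tc_val_sub_three (hn : 7 ≤ n) (x : ZMod n) : (x - 3).val = (x.val + (n-3)) % n := by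
  have := tc_sub_val hn x 3 (by omega) (by omega)
  rwa [Nat.cast_ofNat] at this

lemma tc_edge_cases {e : Sym2 (ZMod n)} {x : ZMod n}
    (he : e ∈ (circulantGraph n).edgeSet) (hx : x ∈ e) :
    e = s(x-1, x) ∨ e = s(x, x+1) ∨ e = s(x-3, x) ∨ e = s(x, x+3) := by
  revert he hx
  induction e using Sym2.ind with
  | _ u w =>
    intro he hx
    rw [SimpleGraph.mem_edgeSet, circulantGraph, SimpleGraph.fromRel_adj] at he
    obtain ⟨hne, hrel⟩ := he
    rw [Sym2.mem_iff] at hx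
    rcases hx with rfl | rfl
    · rcases hrel with (h|h)|(h|h)
      · right; left; rw [show w = x + 1 by linear_combination h]
      · right; right; right; rw [show w = x + 3 by linear_combination h]
      · left; rw [show w = x - 1 by linear_combination -h]; exact Sym2.eq_swap
      · right; right; left; rw [show w = x - 3 by linear_combination -h]; exact Sym2.eq_swap
    · rcases hrel with (h|h)|(h|h)
      · left; rw [show u = x - 1 by linear_combination -h]
      · right; right; left; rw [show u = x - 3 by linear_combination -h]
      · right; left; rw [show u = x + 1 by linear_combination h]; exact Sym2.eq_swap
      · right; right; right; rw [show u = x + 3 by linear_combination h]; exact Sym2.eq_swap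

end

theorem total_chromatic_number_circulant_5p9q (n p q : ℕ) (hn : 7 ≤ n)
    (hpq : n = 5 * p + 9 * q) :
    totalChromaticNumber (circulantGraph n) = 5 := by
  haveI : NeZero n := ⟨by omega⟩
  have KEY : ∀ x : ZMod n,
      TCGood (tcPat p x.val) (tcPat p ((x-1).val)) (tcPat p ((x-3).val)) := by
    intro x
    rw [tc_val_sub_one hn x, tc_val_sub_three hn x]
    exact tc_key p q n x.val hn hpq (ZMod.val_lt x)
  have h5 : HasTotalColoring (circulantGraph n) 5 := by
    refine ⟨fun v => (tcPat p v.val).1,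
      Sym2.lift ⟨fun v w => tcEcf p v w, fun v w => tcEcf_symm hn p v w⟩, ?_, ?_, ?_⟩
    · intro v w hadj
      rw [circulantGraph, SimpleGraph.fromRel_adj] at hadj
      obtain ⟨hne, hrel⟩ := hadj
      show (tcPat p v.val).1 ≠ (tcPat p w.val).1
      rcases hrel with (h|h)|(h|h)
      · rw [show v = w - 1 by linear_combination -h]; exact ((KEY w).1).symm
      · rw [show v = w - 3 by linear_combination -h]; exact ((KEY w).2.1).symm
      · rw [show w = v - 1 by linear_combination -h]; exact (KEY v).1
      · rw [show w = v - 3 by linear_combination -h]; exact (KEY v).2.1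
    · intro e1 he1 e2 he2 hne hshare
      obtain ⟨x, hx1, hx2⟩ := hshare
      obtain ⟨g1,g2,g3,g4,g5,g6,g7,g8,g9,g10,g11,g12⟩ := KEY x
      rcases tc_edge_cases he1 hx1 with h|h|h|h <;>
        rcases tc_edge_cases he2 hx2 with h'|h'|h'|h' <;>
        rw [h, h'] at hne ⊢ <;>
        first
          | exact absurd rfl hne
          | (simp only [Sym2.lift_mk, tcEcf_eval1, tcEcf_eval2, tcEcf_eval3 hn,
              tcEcf_eval4 hn]
             first
               | exact g7 | exact g7.symm | exact g8 | exact g8.symm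
               | exact g9 | exact g9.symm | exact g10 | exact g10.symm
               | exact g11 | exact g11.symm | exact g12 | exact g12.symm)
    · intro x e he hx
      obtain ⟨g1,g2,g3,g4,g5,g6,g7,g8,g9,g10,g11,g12⟩ := KEY x
      rcases tc_edge_cases he hx with h|h|h|h <;> rw [h] <;>
        simp only [Sym2.lift_mk, tcEcf_eval1, tcEcf_eval2, tcEcf_eval3 hn,
          tcEcf_eval4 hn] <;>
        first | exact g3 | exact g4 | exact g5 | exact g6
  have hge : ∀ k, HasTotalColoring (circulantGraph n) k → 5 ≤ k := by
    rintro k ⟨vc, ec, h1, h2, h3⟩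
    have castinj : ∀ a b : ℕ, a < n → b < n → a ≠ b → ((a : ZMod n) ≠ (b : ZMod n)) := by
      intro a b ha hb hab h
      apply hab
      have h' := congrArg ZMod.val h
      rwa [ZMod.val_natCast, ZMod.val_natCast, Nat.mod_eq_of_lt ha, Nat.mod_eq_of_lt hb] at h'
    set u1 : ZMod n := ((1 : ℕ) : ZMod n) with hu1
    set u2 : ZMod n := ((3 : ℕ) : ZMod n) with hu2
    set u3 : ZMod n := ((n-1 : ℕ) : ZMod n) with hu3
    set u4 : ZMod n := ((n-3 : ℕ) : ZMod n) with hu4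
    have n10 : u1 ≠ 0 := by
      have := castinj 1 0 (by omega) (by omega) (by omega); rwa [Nat.cast_zero] at this
    have n20 : u2 ≠ 0 := by
      have := castinj 3 0 (by omega) (by omega) (by omega); rwa [Nat.cast_zero] at this
    have n30 : u3 ≠ 0 := by
      have := castinj (n-1) 0 (by omega) (by omega) (by omega); rwa [Nat.cast_zero] at this
    have n40 : u4 ≠ 0 := by
      have := castinj (n-3) 0 (by omega) (by omega) (by omega); rwa [Nat.cast_zero] at this
    have n12 : u1 ≠ u2 := castinj 1 3 (by omega) (by omega) (by omega)
    have n13 : u1 ≠ u3 := castinj 1 (n-1) (by omega) (by omega) (by omega)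
    have n14 : u1 ≠ u4 := castinj 1 (n-3) (by omega) (by omega) (by omega)
    have n23 : u2 ≠ u3 := castinj 3 (n-1) (by omega) (by omega) (by omega)
    have n24 : u2 ≠ u4 := castinj 3 (n-3) (by omega) (by omega) (by omega)
    have n34 : u3 ≠ u4 := castinj (n-1) (n-3) (by omega) (by omega) (by omega)
    have hu3' : u3 = -1 := by
      rw [hu3, Nat.cast_sub (by omega : 1 ≤ n), ZMod.natCast_self, Nat.cast_one, zero_sub]
    have hu4' : u4 = -3 := by
      rw [hu4, Nat.cast_sub (by omega : 3 ≤ n), ZMod.natCast_self, zero_sub]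
      norm_num
    have adj1 : (circulantGraph n).Adj 0 u1 := by
      rw [circulantGraph, SimpleGraph.fromRel_adj]
      exact ⟨n10.symm, Or.inl (Or.inl (by rw [sub_zero, hu1, Nat.cast_one]))⟩
    have adj2 : (circulantGraph n).Adj 0 u2 := by
      rw [circulantGraph, SimpleGraph.fromRel_adj]
      refine ⟨n20.symm, Or.inl (Or.inr ?_)⟩
      rw [sub_zero, hu2]; norm_num
    have adj3 : (circulantGraph n).Adj 0 u3 := by
      rw [circulantGraph, SimpleGraph.fromRel_adj]
      refine ⟨n30.symm, Or.inr (Or.inl ?_)⟩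
      rw [hu3']; ring
    have adj4 : (circulantGraph n).Adj 0 u4 := by
      rw [circulantGraph, SimpleGraph.fromRel_adj]
      refine ⟨n40.symm, Or.inr (Or.inr ?_)⟩
      rw [hu4']; ring
    have edgene : ∀ a b : ZMod n, a ≠ b → b ≠ 0 →
        s((0 : ZMod n), a) ≠ s((0 : ZMod n), b) := by
      intro a b hab hb0 h
      rw [Sym2.eq_iff] at h
      rcases h with ⟨-, h⟩ | ⟨h, -⟩
      · exact hab h
      · exact hb0 h.symm
    have hE1 := (SimpleGraph.mem_edgeSet _).mpr adj1
    have hE2 := (SimpleGraph.mem_edgeSet _).mpr adj2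
    have hE3 := (SimpleGraph.mem_edgeSet _).mpr adj3
    have hE4 := (SimpleGraph.mem_edgeSet _).mpr adj4
    have m1 : (0 : ZMod n) ∈ s((0 : ZMod n), u1) := Sym2.mem_mk_left 0 u1
    have m2 : (0 : ZMod n) ∈ s((0 : ZMod n), u2) := Sym2.mem_mk_left 0 u2
    have m3 : (0 : ZMod n) ∈ s((0 : ZMod n), u3) := Sym2.mem_mk_left 0 u3
    have m4 : (0 : ZMod n) ∈ s((0 : ZMod n), u4) := Sym2.mem_mk_left 0 u4
    have d01 := h3 0 _ hE1 m1
    have d02 := h3 0 _ hE2 m2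
    have d03 := h3 0 _ hE3 m3
    have d04 := h3 0 _ hE4 m4
    have d12 := h2 _ hE1 _ hE2 (edgene u1 u2 n12 n20) ⟨0, m1, m2⟩
    have d13 := h2 _ hE1 _ hE3 (edgene u1 u3 n13 n30) ⟨0, m1, m3⟩
    have d14 := h2 _ hE1 _ hE4 (edgene u1 u4 n14 n40) ⟨0, m1, m4⟩
    have d23 := h2 _ hE2 _ hE3 (edgene u2 u3 n23 n30) ⟨0, m2, m3⟩
    have d24 := h2 _ hE2 _ hE4 (edgene u2 u4 n24 n40) ⟨0, m2, m4⟩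
    have d34 := h2 _ hE3 _ hE4 (edgene u3 u4 n34 n40) ⟨0, m3, m4⟩
    have hcard : ({vc 0, ec s((0:ZMod n), u1), ec s((0:ZMod n), u2),
        ec s((0:ZMod n), u3), ec s((0:ZMod n), u4)} : Finset (Fin k)).card = 5 := by
      rw [Finset.card_insert_of_notMem (by simp [d01, d02, d03, d04]),
        Finset.card_insert_of_notMem (by simp [d12, d13, d14]),
        Finset.card_insert_of_notMem (by simp [d23, d24]),
        Finset.card_insert_of_notMem (by simp [d34]),
        Finset.card_singleton]
    have hle := Finset.card_le_univ ({vc 0, ec s((0:ZMod n), u1), ec s((0:ZMod n), u2),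
        ec s((0:ZMod n), u3), ec s((0:ZMod n), u4)} : Finset (Fin k))
    rw [hcard] at hle
    simpa using hle
  refine le_antisymm (Nat.sInf_le h5) (le_csInf ⟨5, h5⟩ fun k hk => hge k hk)
end

section
/- For each n ∈ {11, 16, 21, 26, 31}, the total chromatic number of the circulant graph C_n(1,3) equals 5. -/
-- edge characterization
lemma mem_edge_char {n : ℕ} {e : Sym2 (ZMod n)} {v : ZMod n}
    (he : e ∈ (circulantGraph n).edgeSet) (hv : v ∈ e) :
    ∃ d ∈ ([1, 3, -1, -3] : List (ZMod n)), e = s(v, v + d) := by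
  induction e with
  | _ a b =>
    rw [SimpleGraph.mem_edgeSet] at he
    simp only [circulantGraph, SimpleGraph.fromRel_adj] at he
    obtain ⟨hab, h⟩ := he
    rw [Sym2.mem_iff] at hv
    rcases hv with rfl | rfl
    · rcases h with (h | h) | (h | h)
      · exact ⟨1, by simp, by rw [show b = v + 1 by linear_combination h]⟩
      · exact ⟨3, by simp, by rw [show b = v + 3 by linear_combination h]⟩
      · exact ⟨-1, by simp, by rw [show b = v + -1 by linear_combination -h]⟩
      · exact ⟨-3, by simp, by rw [show b = v + -3 by linear_combination -h]⟩
    · rcases h with (h | h) | (h | h)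
      · exact ⟨-1, by simp, by rw [show a = v + -1 by linear_combination -h]; exact Sym2.eq_swap⟩
      · exact ⟨-3, by simp, by rw [show a = v + -3 by linear_combination -h]; exact Sym2.eq_swap⟩
      · exact ⟨1, by simp, by rw [show a = v + 1 by linear_combination h]; exact Sym2.eq_swap⟩
      · exact ⟨3, by simp, by rw [show a = v + 3 by linear_combination h]; exact Sym2.eq_swap⟩

lemma isTotal_of_local (n : ℕ) (vc : ZMod n → Fin 5) (ec : Sym2 (ZMod n) → Fin 5)
    (h1 : ∀ v : ZMod n, ∀ d ∈ ([1, 3, -1, -3] : List (ZMod n)), vc v ≠ vc (v + d))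
    (h2 : ∀ v : ZMod n, ∀ d₁ ∈ ([1, 3, -1, -3] : List (ZMod n)),
        ∀ d₂ ∈ ([1, 3, -1, -3] : List (ZMod n)), d₁ ≠ d₂ →
        ec s(v, v + d₁) ≠ ec s(v, v + d₂))
    (h3 : ∀ v : ZMod n, ∀ d ∈ ([1, 3, -1, -3] : List (ZMod n)), vc v ≠ ec s(v, v + d)) :
    IsTotalColoring (circulantGraph n) 5 vc ec := by
  refine ⟨?_, ?_, ?_⟩
  · intro v w hadj
    simp only [circulantGraph, SimpleGraph.fromRel_adj] at hadj
    obtain ⟨hvw, h⟩ := hadj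
    rcases h with (h | h) | (h | h)
    · rw [show w = v + 1 by linear_combination h]; exact h1 v 1 (by simp)
    · rw [show w = v + 3 by linear_combination h]; exact h1 v 3 (by simp)
    · rw [show w = v + -1 by linear_combination -h]; exact h1 v (-1) (by simp)
    · rw [show w = v + -3 by linear_combination -h]; exact h1 v (-3) (by simp)
  · rintro e₁ he₁ e₂ he₂ hne ⟨v, hv₁, hv₂⟩
    obtain ⟨d₁, hd₁, rfl⟩ := mem_edge_char he₁ hv₁
    obtain ⟨d₂, hd₂, rfl⟩ := mem_edge_char he₂ hv₂
    exact h2 v d₁ hd₁ d₂ hd₂ (fun h => hne (by rw [h]))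
  · intro v e he hv
    obtain ⟨d, hd, rfl⟩ := mem_edge_char he hv
    exact h3 v d hd

lemma five_le (n k : ℕ)
    (hadj : ∀ d ∈ ([1, 3, -1, -3] : List (ZMod n)), (circulantGraph n).Adj 0 d)
    (hp : ([1, 3, -1, -3] : List (ZMod n)).Pairwise (· ≠ ·))
    (h : HasTotalColoring (circulantGraph n) k) : 5 ≤ k := by
  obtain ⟨vc, ec, hvv, hee, hve⟩ := h
  have a1 := hadj 1 (by simp)
  have a3 := hadj 3 (by simp)
  have am1 := hadj (-1) (by simp)
  have am3 := hadj (-3) (by simp)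
  have n1 : (1 : ZMod n) ≠ 0 := (a1.ne).symm
  have n3 : (3 : ZMod n) ≠ 0 := (a3.ne).symm
  have nm1 : (-1 : ZMod n) ≠ 0 := (am1.ne).symm
  have nm3 : (-3 : ZMod n) ≠ 0 := (am3.ne).symm
  simp only [List.pairwise_cons, List.mem_cons, List.mem_singleton, List.not_mem_nil] at hp
  obtain ⟨hp1, hp2, hp3, -⟩ := hp
  have d13 : (1 : ZMod n) ≠ 3 := hp1 3 (by simp)
  have d1m1 : (1 : ZMod n) ≠ -1 := hp1 (-1) (by simp)
  have d1m3 : (1 : ZMod n) ≠ -3 := hp1 (-3) (by simp)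
  have d3m1 : (3 : ZMod n) ≠ -1 := hp2 (-1) (by simp)
  have d3m3 : (3 : ZMod n) ≠ -3 := hp2 (-3) (by simp)
  have dm1m3 : (-1 : ZMod n) ≠ -3 := hp3 (-3) (by simp)
  have key : ∀ x y : ZMod n, x ≠ y → x ≠ 0 → s((0:ZMod n), x) ≠ s((0:ZMod n), y) := by
    intro x y hxy hx h
    rw [Sym2.eq_iff] at h
    rcases h with ⟨-, h⟩ | ⟨-, h⟩
    · exact hxy h
    · exact hx h
  have m1 := (SimpleGraph.mem_edgeSet _).2 a1
  have m3 := (SimpleGraph.mem_edgeSet _).2 a3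
  have mm1 := (SimpleGraph.mem_edgeSet _).2 am1
  have mm3 := (SimpleGraph.mem_edgeSet _).2 am3
  have hv : ∀ x : ZMod n, (0 : ZMod n) ∈ s((0:ZMod n), x) := fun x => Sym2.mem_mk_left 0 x
  set c0 := vc 0
  set c1 := ec s((0:ZMod n), 1)
  set c3 := ec s((0:ZMod n), 3)
  set cm1 := ec s((0:ZMod n), -1)
  set cm3 := ec s((0:ZMod n), -3)
  have e01 : c0 ≠ c1 := hve 0 _ m1 (hv 1)
  have e03 : c0 ≠ c3 := hve 0 _ m3 (hv 3)
  have e0m1 : c0 ≠ cm1 := hve 0 _ mm1 (hv (-1))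
  have e0m3 : c0 ≠ cm3 := hve 0 _ mm3 (hv (-3))
  have e13 : c1 ≠ c3 := hee _ m1 _ m3 (key _ _ d13 n1) ⟨0, hv 1, hv 3⟩
  have e1m1 : c1 ≠ cm1 := hee _ m1 _ mm1 (key _ _ d1m1 n1) ⟨0, hv 1, hv (-1)⟩
  have e1m3 : c1 ≠ cm3 := hee _ m1 _ mm3 (key _ _ d1m3 n1) ⟨0, hv 1, hv (-3)⟩
  have e3m1 : c3 ≠ cm1 := hee _ m3 _ mm1 (key _ _ d3m1 n3) ⟨0, hv 3, hv (-1)⟩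
  have e3m3 : c3 ≠ cm3 := hee _ m3 _ mm3 (key _ _ d3m3 n3) ⟨0, hv 3, hv (-3)⟩
  have em1m3 : cm1 ≠ cm3 := hee _ mm1 _ mm3 (key _ _ dm1m3 nm1) ⟨0, hv (-1), hv (-3)⟩
  have h5 : ({c0, c1, c3, cm1, cm3} : Finset (Fin k)).card = 5 := by
    rw [Finset.card_insert_of_notMem (by simp [e01, e03, e0m1, e0m3]),
      Finset.card_insert_of_notMem (by simp [e13, e1m1, e1m3]),
      Finset.card_insert_of_notMem (by simp [e3m1, e3m3]),
      Finset.card_insert_of_notMem (by simp [em1m3]),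
      Finset.card_singleton]
  have hle := Finset.card_le_univ ({c0, c1, c3, cm1, cm3} : Finset (Fin k))
  rw [h5] at hle
  simpa using hle

def mkVc (n : ℕ) (L : List (Fin 5)) (v : ZMod n) : Fin 5 := L.getD v.val 0

def mkEc (n : ℕ) (A B : List (Fin 5)) (v w : ZMod n) : Fin 5 :=
  if w - v = 1 then A.getD v.val 0
  else if v - w = 1 then A.getD w.val 0
  else if w - v = 3 then B.getD v.val 0
  else if v - w = 3 then B.getD w.val 0
  else 0

def V11 : List (Fin 5) := [1, 2, 1, 3, 0, 3, 1, 4, 2, 3, 2]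
def A11 : List (Fin 5) := [0, 4, 0, 1, 4, 0, 3, 0, 4, 0, 4]
def B11 : List (Fin 5) := [2, 3, 2, 4, 2, 1, 2, 1, 3, 1, 3]

lemma upper11 : HasTotalColoring (circulantGraph 11) 5 :=
  ⟨mkVc 11 V11, Sym2.lift ⟨mkEc 11 A11 B11, by decide⟩,
   isTotal_of_local 11 _ _ (by decide) (by decide) (by decide)⟩

lemma lower11 : ∀ k, HasTotalColoring (circulantGraph 11) k → 5 ≤ k :=
  fun k h => five_le 11 k
    (by intro d hd; simp only [circulantGraph, SimpleGraph.fromRel_adj]; fin_cases hd <;> decide)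
    (by decide) h

def V16 : List (Fin 5) := [0, 3, 4, 2, 4, 1, 3, 1, 2, 4, 2, 0, 1, 4, 1, 2]
def A16 : List (Fin 5) := [1, 0, 3, 1, 0, 4, 2, 4, 0, 3, 4, 3, 0, 3, 0, 3]
def B16 : List (Fin 5) := [4, 2, 2, 0, 3, 3, 1, 0, 1, 2, 1, 2, 4, 2, 4, 1]

lemma upper16 : HasTotalColoring (circulantGraph 16) 5 :=
  ⟨mkVc 16 V16, Sym2.lift ⟨mkEc 16 A16 B16, by decide⟩,
   isTotal_of_local 16 _ _ (by decide) (by decide) (by decide)⟩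

lemma lower16 : ∀ k, HasTotalColoring (circulantGraph 16) k → 5 ≤ k :=
  fun k h => five_le 16 k
    (by intro d hd; simp only [circulantGraph, SimpleGraph.fromRel_adj]; fin_cases hd <;> decide)
    (by decide) h

def V21 : List (Fin 5) := [1, 0, 4, 3, 4, 1, 0, 3, 0, 4, 2, 4, 3, 0, 3, 2, 1, 2, 4, 3, 0]
def A21 : List (Fin 5) := [3, 1, 2, 1, 3, 2, 1, 2, 1, 0, 1, 0, 1, 4, 1, 3, 4, 3, 1, 2, 4]
def B21 : List (Fin 5) := [0, 2, 0, 4, 0, 4, 3, 4, 3, 2, 3, 2, 4, 2, 0, 0, 0, 1, 2, 4, 3]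

lemma upper21 : HasTotalColoring (circulantGraph 21) 5 :=
  ⟨mkVc 21 V21, Sym2.lift ⟨mkEc 21 A21 B21, by decide⟩,
   isTotal_of_local 21 _ _ (by decide) (by decide) (by decide)⟩

lemma lower21 : ∀ k, HasTotalColoring (circulantGraph 21) k → 5 ≤ k :=
  fun k h => five_le 21 k
    (by intro d hd; simp only [circulantGraph, SimpleGraph.fromRel_adj]; fin_cases hd <;> decide)
    (by decide) h

def V26 : List (Fin 5) := [1, 0, 4, 3, 4, 1, 0, 3, 0, 4, 1, 4, 3, 2, 3, 0, 4, 1, 3, 1, 0, 4, 2, 3, 1, 0]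
def A26 : List (Fin 5) := [3, 1, 2, 1, 3, 2, 1, 2, 1, 0, 2, 0, 4, 0, 4, 3, 0, 4, 0, 4, 2, 0, 4, 0, 2, 4]
def B26 : List (Fin 5) := [0, 2, 0, 4, 0, 4, 3, 4, 3, 2, 3, 1, 1, 1, 2, 2, 2, 3, 1, 3, 1, 3, 1, 2, 4, 3]

lemma upper26 : HasTotalColoring (circulantGraph 26) 5 :=
  ⟨mkVc 26 V26, Sym2.lift ⟨mkEc 26 A26 B26, by decide⟩,
   isTotal_of_local 26 _ _ (by decide) (by decide) (by decide)⟩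

lemma lower26 : ∀ k, HasTotalColoring (circulantGraph 26) k → 5 ≤ k :=
  fun k h => five_le 26 k
    (by intro d hd; simp only [circulantGraph, SimpleGraph.fromRel_adj]; fin_cases hd <;> decide)
    (by decide) h

def V31 : List (Fin 5) := [1, 0, 4, 3, 4, 1, 0, 3, 0, 4, 1, 4, 3, 2, 3, 0, 4, 1, 3, 0, 2, 4, 1, 3, 1, 3, 0, 2, 4, 1, 0]
def A31 : List (Fin 5) := [3, 1, 2, 1, 3, 2, 1, 2, 1, 0, 2, 0, 4, 0, 4, 3, 0, 4, 1, 4, 1, 2, 4, 2, 4, 2, 4, 3, 0, 2, 4]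
def B31 : List (Fin 5) := [0, 2, 0, 4, 0, 4, 3, 4, 3, 2, 3, 1, 1, 1, 2, 2, 2, 3, 0, 3, 0, 3, 0, 1, 0, 1, 3, 1, 2, 4, 3]

lemma upper31 : HasTotalColoring (circulantGraph 31) 5 :=
  ⟨mkVc 31 V31, Sym2.lift ⟨mkEc 31 A31 B31, by decide⟩,
   isTotal_of_local 31 _ _ (by decide) (by decide) (by decide)⟩

lemma lower31 : ∀ k, HasTotalColoring (circulantGraph 31) k → 5 ≤ k :=
  fun k h => five_le 31 k
    (by intro d hd; simp only [circulantGraph, SimpleGraph.fromRel_adj]; fin_cases hd <;> decide)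
    (by decide) h

theorem total_chromatic_number_circulant_11_16_21_26_31 (n : ℕ)
    (hn : n ∈ ({11, 16, 21, 26, 31} : Finset ℕ)) :
    totalChromaticNumber (circulantGraph n) = 5 := by
  have h : n = 11 ∨ n = 16 ∨ n = 21 ∨ n = 26 ∨ n = 31 := by simpa using hn
  rcases h with rfl | rfl | rfl | rfl | rfl
  · exact le_antisymm (Nat.sInf_le upper11) (le_csInf ⟨5, upper11⟩ fun k hk => lower11 k hk)
  · exact le_antisymm (Nat.sInf_le upper16) (le_csInf ⟨5, upper16⟩ fun k hk => lower16 k hk)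
  · exact le_antisymm (Nat.sInf_le upper21) (le_csInf ⟨5, upper21⟩ fun k hk => lower21 k hk)
  · exact le_antisymm (Nat.sInf_le upper26) (le_csInf ⟨5, upper26⟩ fun k hk => lower26 k hk)
  · exact le_antisymm (Nat.sInf_le upper31) (le_csInf ⟨5, upper31⟩ fun k hk => lower31 k hk)
end

section
/- The total chromatic number of the circulant graph C_22(1,3) equals 5. -/
set_option maxRecDepth 10000

/-! ### Explicit colouring -/

def vcL : List (Fin 5) := [0, 1, 0, 2, 4, 3, 1, 0, 1, 4, 1, 0, 3, 0, 4, 1, 3, 1, 0, 4, 2, 3]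

def aL : List (Fin 5) := [2,3,4,3,2,4,2,3,2,0,3,2,4,3,2,4,2,4,2,1,0]

def bL : List (Fin 5) := [1,0,1,0,1,0,3,4,4,1,2,1,0,1,0,3,0,3,1]

def Fc : ℕ → ℕ → Fin 5 := fun a b =>
  if b = a + 1 then aL.getD a 0
  else if b = a + 3 then bL.getD a 0
  else if a = 0 ∧ b = 21 then 4
  else if a = 0 ∧ b = 19 then 3
  else if a = 1 ∧ b = 20 then 4
  else if a = 2 ∧ b = 21 then 2
  else 0

def myVc : ZMod 22 → Fin 5 := fun i => vcL.getD i.val 0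

def myEc : Sym2 (ZMod 22) → Fin 5 :=
  Sym2.lift ⟨fun i j => Fc (min i.val j.val) (max i.val j.val), by
    intro i j; simp [min_comm, max_comm]⟩

instance : DecidableRel (circulantGraph 22).Adj := fun a b =>
  decidable_of_iff (a ≠ b ∧ ((b - a = 1 ∨ b - a = 3) ∨ (a - b = 1 ∨ a - b = 3)))
    (by rw [circulantGraph, SimpleGraph.fromRel_adj])

lemma has5 : HasTotalColoring (circulantGraph 22) 5 := by
  refine ⟨myVc, myEc, ?_, ?_, ?_⟩
  · decide
  · decide
  · decide

lemma lower {k : ℕ} (h : HasTotalColoring (circulantGraph 22) k) : 5 ≤ k := by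
  obtain ⟨vc, ec, h1, h2, h3⟩ := h
  have adj1 : (circulantGraph 22).Adj 0 1 := by decide
  have adj3 : (circulantGraph 22).Adj 0 3 := by decide
  have adjm1 : (circulantGraph 22).Adj 0 21 := by decide
  have adjm3 : (circulantGraph 22).Adj 0 19 := by decide
  set e1 : Sym2 (ZMod 22) := s(0, 1)
  set e2 : Sym2 (ZMod 22) := s(0, 3)
  set e3 : Sym2 (ZMod 22) := s(0, 21)
  set e4 : Sym2 (ZMod 22) := s(0, 19)
  have m1 : e1 ∈ (circulantGraph 22).edgeSet := adj1
  have m2 : e2 ∈ (circulantGraph 22).edgeSet := adj3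
  have m3 : e3 ∈ (circulantGraph 22).edgeSet := adjm1
  have m4 : e4 ∈ (circulantGraph 22).edgeSet := adjm3
  have z1 : (0 : ZMod 22) ∈ e1 := by decide
  have z2 : (0 : ZMod 22) ∈ e2 := by decide
  have z3 : (0 : ZMod 22) ∈ e3 := by decide
  have z4 : (0 : ZMod 22) ∈ e4 := by decide
  have S : Finset (Fin k) := ∅
  have hcard : ({vc 0, ec e1, ec e2, ec e3, ec e4} : Finset (Fin k)).card = 5 := by
    have d01 := h3 0 e1 m1 z1
    have d02 := h3 0 e2 m2 z2
    have d03 := h3 0 e3 m3 z3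
    have d04 := h3 0 e4 m4 z4
    have d12 := h2 e1 m1 e2 m2 (by decide) ⟨0, z1, z2⟩
    have d13 := h2 e1 m1 e3 m3 (by decide) ⟨0, z1, z3⟩
    have d14 := h2 e1 m1 e4 m4 (by decide) ⟨0, z1, z4⟩
    have d23 := h2 e2 m2 e3 m3 (by decide) ⟨0, z2, z3⟩
    have d24 := h2 e2 m2 e4 m4 (by decide) ⟨0, z2, z4⟩
    have d34 := h2 e3 m3 e4 m4 (by decide) ⟨0, z3, z4⟩
    simp [Finset.card_insert_of_notMem, Finset.mem_insert, Finset.mem_singleton,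
      d01, d02, d03, d04, d12, d13, d14, d23, d24, d34]
  calc 5 = ({vc 0, ec e1, ec e2, ec e3, ec e4} : Finset (Fin k)).card := hcard.symm
    _ ≤ Fintype.card (Fin k) := Finset.card_le_univ _
    _ = k := Fintype.card_fin k

theorem total_chromatic_number_circulant_22 :
    totalChromaticNumber (circulantGraph 22) = 5 := by
  refine le_antisymm (Nat.sInf_le has5) (le_csInf ⟨5, has5⟩ fun k hk => lower hk)
end

section
/- The total chromatic number of the circulant graph C_8(1,3) equals 6. -/
instance circDecAdj : DecidableRel (circulantGraph 8).Adj :=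
  fun a b => decidable_of_iff _ (SimpleGraph.fromRel_adj _ a b).symm

lemma aux_parity : ∀ w u : ZMod 8, (w=1∨w=3∨w=5∨w=7) → (u = w+1 ∨ u = w+3 ∨ u = w+5 ∨ u = w+7) → u ≠ 0 → (u = 2 ∨ u = 4 ∨ u = 6) := by decide
lemma aux_adj : ∀ w u : ZMod 8, (w=1∨w=3∨w=5∨w=7) → (u=2∨u=4∨u=6) → (circulantGraph 8).Adj w u := by decide
lemma aux_adjadd : ∀ w u : ZMod 8, (u = w+1 ∨ u = w+3 ∨ u = w+5 ∨ u = w+7) → (circulantGraph 8).Adj w u := by decide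
lemma aux_sym2ne : ∀ w w' u : ZMod 8, w ≠ w' → (u=2∨u=4∨u=6) → s(w,u) ≠ s(w',u) := by decide
lemma aux_final : ∀ a b d e : ZMod 8, ¬((a=2∨a=4∨a=6) ∧ (b=2∨b=4∨b=6) ∧ (d=2∨d=4∨d=6) ∧ (e=2∨e=4∨e=6) ∧ a≠b ∧ a≠d ∧ a≠e ∧ b≠d ∧ b≠e ∧ d≠e) := by decide

lemma fin5_pigeon' : ∀ c v a b d e : Fin 5, ¬(a ≠ b ∧ a ≠ d ∧ a ≠ e ∧ b ≠ d ∧ b ≠ e ∧ d ≠ e ∧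
    a ≠ v ∧ b ≠ v ∧ d ≠ v ∧ e ≠ v ∧ a ≠ c ∧ b ≠ c ∧ d ≠ c ∧ e ≠ c ∧ v ≠ c) := by decide
lemma fin5_pigeon (c v a b d e : Fin 5) : a ≠ b → a ≠ d → a ≠ e → b ≠ d → b ≠ e → d ≠ e →
    a ≠ v → b ≠ v → d ≠ v → e ≠ v → a ≠ c → b ≠ c → d ≠ c → e ≠ c → v ≠ c → False := by
  intros; exact fin5_pigeon' c v a b d e ⟨‹_›,‹_›,‹_›,‹_›,‹_›,‹_›,‹_›,‹_›,‹_›,‹_›,‹_›,‹_›,‹_›,‹_›,‹_›⟩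

lemma adj_facts : ∀ w : ZMod 8, (circulantGraph 8).Adj w (w+1) ∧ (circulantGraph 8).Adj w (w+3)
    ∧ (circulantGraph 8).Adj w (w+5) ∧ (circulantGraph 8).Adj w (w+7) := by decide

lemma edge_ne_facts : ∀ w : ZMod 8, s(w,w+1) ≠ s(w,w+3) ∧ s(w,w+1) ≠ s(w,w+5) ∧ s(w,w+1) ≠ s(w,w+7)
    ∧ s(w,w+3) ≠ s(w,w+5) ∧ s(w,w+3) ≠ s(w,w+7) ∧ s(w,w+5) ≠ s(w,w+7) := by decide

lemma star (vc : ZMod 8 → Fin 5) (ec : Sym2 (ZMod 8) → Fin 5)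
    (h : IsTotalColoring (circulantGraph 8) 5 vc ec) (w : ZMod 8) (c : Fin 5)
    (hwc : vc w ≠ c) :
    ∃ u, (u = w+1 ∨ u = w+3 ∨ u = w+5 ∨ u = w+7) ∧ ec s(w,u) = c := by
  obtain ⟨h1, h2, h3⟩ := h
  by_contra hcon
  push_neg at hcon
  obtain ⟨a1, a3, a5, a7⟩ := adj_facts w
  obtain ⟨n13, n15, n17, n35, n37, n57⟩ := edge_ne_facts w
  have m1 : s(w,w+1) ∈ (circulantGraph 8).edgeSet := a1
  have m3 : s(w,w+3) ∈ (circulantGraph 8).edgeSet := a3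
  have m5 : s(w,w+5) ∈ (circulantGraph 8).edgeSet := a5
  have m7 : s(w,w+7) ∈ (circulantGraph 8).edgeSet := a7
  have mw : ∀ u : ZMod 8, w ∈ s(w,u) := fun u => Sym2.mem_mk_left w u
  exact fin5_pigeon c (vc w) (ec s(w,w+1)) (ec s(w,w+3)) (ec s(w,w+5)) (ec s(w,w+7))
    (h2 _ m1 _ m3 n13 ⟨w, mw _, mw _⟩) (h2 _ m1 _ m5 n15 ⟨w, mw _, mw _⟩)
    (h2 _ m1 _ m7 n17 ⟨w, mw _, mw _⟩) (h2 _ m3 _ m5 n35 ⟨w, mw _, mw _⟩)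
    (h2 _ m3 _ m7 n37 ⟨w, mw _, mw _⟩) (h2 _ m5 _ m7 n57 ⟨w, mw _, mw _⟩)
    (fun he => h3 w _ m1 (mw _) he.symm) (fun he => h3 w _ m3 (mw _) he.symm)
    (fun he => h3 w _ m5 (mw _) he.symm) (fun he => h3 w _ m7 (mw _) he.symm)
    (hcon _ (Or.inl rfl)) (hcon _ (Or.inr (Or.inl rfl)))
    (hcon _ (Or.inr (Or.inr (Or.inl rfl)))) (hcon _ (Or.inr (Or.inr (Or.inr rfl)))) hwc

lemma adj0 : ∀ w : ZMod 8, (w=1∨w=3∨w=5∨w=7) → (circulantGraph 8).Adj 0 w := by decide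

lemma no5 : ¬ HasTotalColoring (circulantGraph 8) 5 := by
  rintro ⟨vc, ec, hcol⟩
  obtain ⟨h1, h2, h3⟩ := id hcol
  set c := vc 0 with hc
  have key : ∀ w : ZMod 8, (w=1∨w=3∨w=5∨w=7) → ∃ u, (u = 2 ∨ u = 4 ∨ u = 6) ∧ ec s(w,u) = c := by
    intro w hw
    have hvcw : vc w ≠ c := Ne.symm (h1 0 w (adj0 w hw))
    obtain ⟨u, hu, hecu⟩ := star vc ec hcol w c hvcw
    have hadjwu : (circulantGraph 8).Adj w u := aux_adjadd w u hu
    have hu0 : u ≠ 0 := by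
      intro h0
      subst h0
      exact h3 0 s(w,(0:ZMod 8)) hadjwu
        (Sym2.mem_mk_right w 0) hecu.symm
    exact ⟨u, aux_parity w u hw hu hu0, hecu⟩
  have pairNe : ∀ w w' u : ZMod 8, (w=1∨w=3∨w=5∨w=7) → (w'=1∨w'=3∨w'=5∨w'=7) → w ≠ w' →
      (u=2∨u=4∨u=6) → ec s(w,u) = c → ec s(w',u) = c → False := by
    intro w w' u hw hw' hne hu e e'
    exact h2 s(w,u) ((aux_adj w u hw hu))
      s(w',u) ((aux_adj w' u hw' hu))
      (aux_sym2ne w w' u hne hu) ⟨u, Sym2.mem_mk_right w u, Sym2.mem_mk_right w' u⟩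
      (e.trans e'.symm)
  obtain ⟨u1, hu1, he1⟩ := key 1 (Or.inl rfl)
  obtain ⟨u3, hu3, he3⟩ := key 3 (Or.inr (Or.inl rfl))
  obtain ⟨u5, hu5, he5⟩ := key 5 (Or.inr (Or.inr (Or.inl rfl)))
  obtain ⟨u7, hu7, he7⟩ := key 7 (Or.inr (Or.inr (Or.inr rfl)))
  have d13 : u1 ≠ u3 := fun h => pairNe 1 3 u1 (Or.inl rfl) (Or.inr (Or.inl rfl)) (by decide) hu1 he1 (by rw [h]; exact he3)
  have d15 : u1 ≠ u5 := fun h => pairNe 1 5 u1 (Or.inl rfl) (Or.inr (Or.inr (Or.inl rfl))) (by decide) hu1 he1 (by rw [h]; exact he5)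
  have d17 : u1 ≠ u7 := fun h => pairNe 1 7 u1 (Or.inl rfl) (Or.inr (Or.inr (Or.inr rfl))) (by decide) hu1 he1 (by rw [h]; exact he7)
  have d35 : u3 ≠ u5 := fun h => pairNe 3 5 u3 (Or.inr (Or.inl rfl)) (Or.inr (Or.inr (Or.inl rfl))) (by decide) hu3 he3 (by rw [h]; exact he5)
  have d37 : u3 ≠ u7 := fun h => pairNe 3 7 u3 (Or.inr (Or.inl rfl)) (Or.inr (Or.inr (Or.inr rfl))) (by decide) hu3 he3 (by rw [h]; exact he7)
  have d57 : u5 ≠ u7 := fun h => pairNe 5 7 u5 (Or.inr (Or.inr (Or.inl rfl))) (Or.inr (Or.inr (Or.inr rfl))) (by decide) hu5 he5 (by rw [h]; exact he7)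
  exact aux_final u1 u3 u5 u7 ⟨hu1, hu3, hu5, hu7, d13, d15, d17, d35, d37, d57⟩

def vc6 : ZMod 8 → Fin 6 := fun v => if v.val % 2 = 0 then 4 else 5
def ec6 : Sym2 (ZMod 8) → Fin 6 :=
  Sym2.lift ⟨fun u w => ⟨(u.val / 2 + w.val / 2) % 4, by omega⟩,
    by intro u w; simp [Nat.add_comm]⟩

lemma upper : HasTotalColoring (circulantGraph 8) 6 :=
  ⟨vc6, ec6, by decide, by decide, by decide⟩

lemma mono {V : Type*} (G : SimpleGraph V) {k m : ℕ} (hkm : k ≤ m) :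
    HasTotalColoring G k → HasTotalColoring G m := by
  rintro ⟨vc, ec, h1, h2, h3⟩
  refine ⟨Fin.castLE hkm ∘ vc, Fin.castLE hkm ∘ ec, ?_, ?_, ?_⟩
  · exact fun v w h hh => h1 v w h (Fin.castLE_injective hkm hh)
  · exact fun e1 m1 e2 m2 hne hex hh => h2 e1 m1 e2 m2 hne hex (Fin.castLE_injective hkm hh)
  · exact fun v e me hv hh => h3 v e me hv (Fin.castLE_injective hkm hh)

theorem total_chromatic_number_circulant_8 :
    totalChromaticNumber (circulantGraph 8) = 6 := by
  apply le_antisymm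
  · exact Nat.sInf_le upper
  · refine le_csInf ⟨6, upper⟩ ?_
    intro k hk
    by_contra hlt
    push_neg at hlt
    exact no5 (mono _ (by omega) hk)
end

section
/- If the circulant graph C_13(1,3) has a total 5-colouring σ, then the five vertex colour classes V_1, ..., V_5 (where V_j is the set of vertices coloured j), listed in nonincreasing order of size, have sizes |V_1| = |V_2| = |V_3| = |V_4| = 3 and |V_5| = 1. -/
/-! ### Auxiliary material -/

def ok2 (a b : ZMod 13) : Prop := a ≠ b ∧ b - a ≠ 1 ∧ b - a ≠ 3 ∧ a - b ≠ 1 ∧ a - b ≠ 3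
instance : DecidableRel ok2 := fun a b => by unfold ok2; infer_instance
def mem5 (v x1 x2 x3 x4 x5 : ZMod 13) : Prop := v = x1 ∨ v = x2 ∨ v = x3 ∨ v = x4 ∨ v = x5
instance (v a b c d e : ZMod 13) : Decidable (mem5 v a b c d e) := by unfold mem5; infer_instance

set_option maxHeartbeats 16000000 in
set_option maxRecDepth 100000 in
/-- Every independent 5-set in `C₁₃(1,3)` has an outside vertex all of whose
neighbours lie in the set. -/
lemma key5 : ∀ x1 x2 : ZMod 13, ok2 x1 x2 → ∀ x3, ok2 x1 x3 → ok2 x2 x3 →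
    ∀ x4, ok2 x1 x4 → ok2 x2 x4 → ok2 x3 x4 → ∀ x5, ok2 x1 x5 → ok2 x2 x5 → ok2 x3 x5 → ok2 x4 x5 →
    ∃ v : ZMod 13, ¬ mem5 v x1 x2 x3 x4 x5 ∧ mem5 (v+1) x1 x2 x3 x4 x5 ∧
      mem5 (v+12) x1 x2 x3 x4 x5 ∧ mem5 (v+3) x1 x2 x3 x4 x5 ∧ mem5 (v+10) x1 x2 x3 x4 x5 := by
  decide

lemma bool5 : ∀ b : Fin 5 → Bool, (∑ c, (if b c then 1 else 3)) = 13 →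
    ∃ j₀, b j₀ = true ∧ ∀ j, j ≠ j₀ → b j = false := by decide

lemma adj_iff (v w : ZMod 13) : (circulantGraph 13).Adj v w ↔
    (w - v = 1 ∨ w - v = 12 ∨ w - v = 3 ∨ w - v = 10) := by
  have hx : ∀ x : ZMod 13, (x ≠ 0 ∧ ((x = 1 ∨ x = 3) ∨ (-x = 1 ∨ -x = 3))) ↔
      (x = 1 ∨ x = 12 ∨ x = 3 ∨ x = 10) := by decide
  have := hx (w - v)
  rw [neg_sub] at this
  rw [circulantGraph, SimpleGraph.fromRel_adj, ← this, sub_ne_zero, ne_comm]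

lemma sym2_ne (v d d' : ZMod 13) (h1 : d ≠ d') (h2 : d ≠ 0) :
    s(v, v + d) ≠ s(v, v + d') := by
  intro h
  rw [Sym2.eq_iff] at h
  rcases h with ⟨-, h⟩ | ⟨-, h⟩
  · exact h1 (add_left_cancel h)
  · exact h2 (by rwa [add_eq_left] at h)

lemma adj_add (v d : ZMod 13) (hd : d = 1 ∨ d = 12 ∨ d = 3 ∨ d = 10) :
    (circulantGraph 13).Adj v (v + d) := by
  rw [adj_iff, add_sub_cancel_left]; exact hd

lemma even_card_of_invol {α : Type*} [DecidableEq α] :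
    ∀ (T : Finset α) (m : α → α),
    (∀ v ∈ T, m v ∈ T) → (∀ v ∈ T, m (m v) = v) → (∀ v ∈ T, m v ≠ v) → Even T.card := by
  intro T
  induction T using Finset.strongInduction with
  | _ T ih =>
    intro m h1 h2 h3
    rcases T.eq_empty_or_nonempty with rfl | ⟨v, hv⟩
    · simp
    · have hmv := h1 v hv
      have hne := h3 v hv
      have hsubT : ({v, m v} : Finset α) ⊆ T := by
        intro x hx
        simp only [Finset.mem_insert, Finset.mem_singleton] at hx
        rcases hx with rfl | rfl <;> assumption
      have hpair : ({v, m v} : Finset α).card = 2 := by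
        rw [Finset.card_insert_of_notMem (by simp [Ne.symm hne]), Finset.card_singleton]
      have hpsub : T \ {v, m v} ⊂ T := Finset.sdiff_ssubset hsubT (by simp)
      have hcard : (T \ {v, m v}).card = T.card - 2 := by
        rw [Finset.card_sdiff_of_subset hsubT, hpair]
      have hmem : ∀ w ∈ T \ {v, m v}, w ∈ T ∧ w ≠ v ∧ w ≠ m v := by
        intro w hw
        simp only [Finset.mem_sdiff, Finset.mem_insert, Finset.mem_singleton, not_or] at hw
        exact ⟨hw.1, hw.2.1, hw.2.2⟩
      have key : Even (T \ {v, m v}).card := by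
        apply ih _ hpsub m
        · intro w hw
          obtain ⟨hwT, hwv, hwm⟩ := hmem w hw
          simp only [Finset.mem_sdiff, Finset.mem_insert, Finset.mem_singleton, not_or]
          refine ⟨h1 w hwT, ?_, ?_⟩
          · intro hmw; exact hwm (by rw [← h2 w hwT, hmw])
          · intro hmw; exact hwv (by rw [← h2 w hwT, hmw, h2 v hv])
        · intro w hw; exact h2 w (hmem w hw).1
        · intro w hw; exact h3 w (hmem w hw).1
      have h2le : 2 ≤ T.card := hpair ▸ Finset.card_le_card hsubT
      rw [hcard] at key
      rcases key with ⟨k, hk⟩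
      exact ⟨k + 1, by omega⟩

lemma at_vertex (vc : ZMod 13 → Fin 5) (ec : Sym2 (ZMod 13) → Fin 5)
    (h : IsTotalColoring (circulantGraph 13) 5 vc ec) (v : ZMod 13) (c : Fin 5) :
    vc v = c ∨ ec s(v, v+1) = c ∨ ec s(v, v+12) = c ∨ ec s(v, v+3) = c ∨ ec s(v, v+10) = c := by
  obtain ⟨h1, h2, h3⟩ := h
  have he : ∀ d : ZMod 13, (d = 1 ∨ d = 12 ∨ d = 3 ∨ d = 10) →
      s(v, v + d) ∈ (circulantGraph 13).edgeSet := by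
    intro d hd
    rw [SimpleGraph.mem_edgeSet]
    exact adj_add v d hd
  have hvne : ∀ d : ZMod 13, (d = 1 ∨ d = 12 ∨ d = 3 ∨ d = 10) → vc v ≠ ec s(v, v + d) := by
    intro d hd
    exact h3 v _ (he d hd) (Sym2.mem_mk_left v _)
  have hene : ∀ d d' : ZMod 13, (d = 1 ∨ d = 12 ∨ d = 3 ∨ d = 10) →
      (d' = 1 ∨ d' = 12 ∨ d' = 3 ∨ d' = 10) → d ≠ d' →
      ec s(v, v + d) ≠ ec s(v, v + d') := by
    intro d d' hd hd' hne
    refine h2 _ (he d hd) _ (he d' hd') (sym2_ne v d d' hne ?_)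
      ⟨v, Sym2.mem_mk_left _ _, Sym2.mem_mk_left _ _⟩
    rcases hd with rfl | rfl | rfl | rfl <;> decide
  by_contra hc
  push_neg at hc
  obtain ⟨hc0, hc1, hc2, hc3, hc4⟩ := hc
  have hnd : ([c, vc v, ec s(v, v+1), ec s(v, v+12), ec s(v, v+3), ec s(v, v+10)] :
      List (Fin 5)).Nodup := by
    have d1 := hvne 1 (by decide); have d2 := hvne 12 (by decide)
    have d3 := hvne 3 (by decide); have d4 := hvne 10 (by decide)
    have e12 := hene 1 12 (by decide) (by decide) (by decide)
    have e13 := hene 1 3 (by decide) (by decide) (by decide)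
    have e14 := hene 1 10 (by decide) (by decide) (by decide)
    have e23 := hene 12 3 (by decide) (by decide) (by decide)
    have e24 := hene 12 10 (by decide) (by decide) (by decide)
    have e34 := hene 3 10 (by decide) (by decide) (by decide)
    simp only [List.nodup_cons, List.mem_cons, List.mem_singleton, List.not_mem_nil,
      List.nodup_nil, not_or, and_true]
    tauto
  have := hnd.length_le_card
  simp at this

lemma odd_class (vc : ZMod 13 → Fin 5) (ec : Sym2 (ZMod 13) → Fin 5)
    (h : IsTotalColoring (circulantGraph 13) 5 vc ec) (c : Fin 5) :
    Odd (Finset.univ.filter (fun v : ZMod 13 => vc v = c)).card := by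
  classical
  obtain ⟨h1, h2, h3⟩ := h
  set T := Finset.univ.filter (fun v : ZMod 13 => ¬ vc v = c) with hT
  have hex : ∀ v : ZMod 13, vc v ≠ c →
      ∃ w, (circulantGraph 13).Adj v w ∧ ec s(v, w) = c := by
    intro v hv
    rcases at_vertex vc ec ⟨h1, h2, h3⟩ v c with h0 | h0 | h0 | h0 | h0
    · exact absurd h0 hv
    · exact ⟨v + 1, adj_add v 1 (by decide), h0⟩
    · exact ⟨v + 12, adj_add v 12 (by decide), h0⟩
    · exact ⟨v + 3, adj_add v 3 (by decide), h0⟩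
    · exact ⟨v + 10, adj_add v 10 (by decide), h0⟩
  have huniq : ∀ v w w' : ZMod 13, (circulantGraph 13).Adj v w → ec s(v, w) = c →
      (circulantGraph 13).Adj v w' → ec s(v, w') = c → w = w' := by
    intro v w w' ha hcw ha' hcw'
    by_contra hne
    have hedge : s(v, w) ≠ s(v, w') := by
      intro heq
      rw [Sym2.eq_iff] at heq
      rcases heq with ⟨-, hh⟩ | ⟨hh, -⟩
      · exact hne hh
      · exact ha'.ne hh
    exact h2 _ ((SimpleGraph.mem_edgeSet _).mpr ha) _ ((SimpleGraph.mem_edgeSet _).mpr ha') hedge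
      ⟨v, Sym2.mem_mk_left _ _, Sym2.mem_mk_left _ _⟩ (by rw [hcw, hcw'])
  let m : ZMod 13 → ZMod 13 := fun v =>
    if hh : ∃ w, (circulantGraph 13).Adj v w ∧ ec s(v, w) = c then hh.choose else v
  have hm : ∀ v : ZMod 13, vc v ≠ c →
      (circulantGraph 13).Adj v (m v) ∧ ec s(v, m v) = c := by
    intro v hv
    have hh := hex v hv
    simp only [m, dif_pos hh]
    exact hh.choose_spec
  have hmT : ∀ v : ZMod 13, vc v ≠ c → vc (m v) ≠ c := by
    intro v hv
    obtain ⟨ha, hcc⟩ := hm v hv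
    have := h3 (m v) _ ((SimpleGraph.mem_edgeSet _).mpr ha) (Sym2.mem_mk_right _ _)
    rw [hcc] at this
    exact this
  have hT1 : ∀ v ∈ T, m v ∈ T := by
    intro v hv
    rw [hT, Finset.mem_filter] at hv ⊢
    exact ⟨Finset.mem_univ _, hmT v hv.2⟩
  have hT2 : ∀ v ∈ T, m (m v) = v := by
    intro v hv
    rw [hT, Finset.mem_filter] at hv
    obtain ⟨ha, hcc⟩ := hm v hv.2
    obtain ⟨ha2, hcc2⟩ := hm (m v) (hmT v hv.2)
    exact huniq (m v) (m (m v)) v ha2 hcc2 ha.symm (by rw [Sym2.eq_swap]; exact hcc)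
  have hT3 : ∀ v ∈ T, m v ≠ v := by
    intro v hv
    rw [hT, Finset.mem_filter] at hv
    exact ((hm v hv.2).1).ne'
  have heven := even_card_of_invol T m hT1 hT2 hT3
  have hsplit := Finset.card_filter_add_card_filter_not
    (s := (Finset.univ : Finset (ZMod 13))) (p := fun v : ZMod 13 => vc v = c)
  have hcu : (Finset.univ : Finset (ZMod 13)).card = 13 := by decide
  rcases heven with ⟨k, hk⟩
  rw [Nat.odd_iff]
  rw [hT] at hk
  omega

lemma class_lt5 (vc : ZMod 13 → Fin 5) (ec : Sym2 (ZMod 13) → Fin 5)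
    (h : IsTotalColoring (circulantGraph 13) 5 vc ec) (c : Fin 5) :
    (Finset.univ.filter (fun v : ZMod 13 => vc v = c)).card < 5 := by
  obtain ⟨h1, h2, h3⟩ := h
  by_contra h5
  push_neg at h5
  obtain ⟨S, hS, hcard⟩ := Finset.exists_subset_card_eq h5
  rw [show (5 : ℕ) = 4 + 1 from rfl, Finset.card_eq_succ] at hcard
  obtain ⟨x1, t1, hn1, rfl, hc1⟩ := hcard
  rw [show (4 : ℕ) = 3 + 1 from rfl, Finset.card_eq_succ] at hc1
  obtain ⟨x2, t2, hn2, rfl, hc2⟩ := hc1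
  rw [show (3 : ℕ) = 2 + 1 from rfl, Finset.card_eq_succ] at hc2
  obtain ⟨x3, t3, hn3, rfl, hc3⟩ := hc2
  rw [show (2 : ℕ) = 1 + 1 from rfl, Finset.card_eq_succ] at hc3
  obtain ⟨x4, t4, hn4, rfl, hc4⟩ := hc3
  obtain ⟨x5, rfl⟩ := Finset.card_eq_one.mp hc4
  set S : Finset (ZMod 13) := insert x1 (insert x2 (insert x3 (insert x4 {x5}))) with hSdef
  have hvcS : ∀ x ∈ S, vc x = c := by
    intro x hx
    have := hS hx
    rw [Finset.mem_filter] at this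
    exact this.2
  have hok : ∀ a b : ZMod 13, a ∈ S → b ∈ S → a ≠ b → ok2 a b := by
    intro a b ha hb hne
    have hca := hvcS a ha
    have hcb := hvcS b hb
    have hcc : vc a = vc b := by rw [hca, hcb]
    refine ⟨hne, ?_, ?_, ?_, ?_⟩ <;> intro hd
    · exact h1 a b ((adj_iff a b).2 (Or.inl hd)) hcc
    · exact h1 a b ((adj_iff a b).2 (Or.inr (Or.inr (Or.inl hd)))) hcc
    · exact h1 b a ((adj_iff b a).2 (Or.inl hd)) hcc.symm
    · exact h1 b a ((adj_iff b a).2 (Or.inr (Or.inr (Or.inl hd)))) hcc.symm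
  have m1 : x1 ∈ S := by simp [hSdef]
  have m2 : x2 ∈ S := by simp [hSdef]
  have m3 : x3 ∈ S := by simp [hSdef]
  have m4 : x4 ∈ S := by simp [hSdef]
  have m5 : x5 ∈ S := by simp [hSdef]
  simp only [Finset.mem_insert, Finset.mem_singleton, not_or] at hn1 hn2 hn3 hn4
  obtain ⟨v, hv0, hv1, hv2, hv3, hv4⟩ :=
    key5 x1 x2 (hok _ _ m1 m2 hn1.1) x3 (hok _ _ m1 m3 hn1.2.1) (hok _ _ m2 m3 hn2.1)
      x4 (hok _ _ m1 m4 hn1.2.2.1) (hok _ _ m2 m4 hn2.2.1) (hok _ _ m3 m4 hn3.1)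
      x5 (hok _ _ m1 m5 hn1.2.2.2) (hok _ _ m2 m5 hn2.2.2) (hok _ _ m3 m5 hn3.2)
      (hok _ _ m4 m5 hn4)
  have hmemS : ∀ w : ZMod 13, mem5 w x1 x2 x3 x4 x5 → w ∈ S := by
    intro w hw
    rcases hw with rfl | rfl | rfl | rfl | rfl <;> assumption
  have hvS : ∀ w : ZMod 13, mem5 w x1 x2 x3 x4 x5 → vc w = c := fun w hw => hvcS w (hmemS w hw)
  have hvnc : vc v ≠ c := by
    intro hvc
    have hne : vc v ≠ vc (v + 1) := h1 v (v + 1) (adj_add v 1 (by decide))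
    exact hne (by rw [hvc, hvS _ hv1])
  rcases at_vertex vc ec ⟨h1, h2, h3⟩ v c with h0 | h0 | h0 | h0 | h0
  · exact hvnc h0
  · exact h3 (v + 1) _ ((SimpleGraph.mem_edgeSet _).mpr (adj_add v 1 (by decide)))
      (Sym2.mem_mk_right _ _) (by rw [hvS _ hv1, h0])
  · exact h3 (v + 12) _ ((SimpleGraph.mem_edgeSet _).mpr (adj_add v 12 (by decide)))
      (Sym2.mem_mk_right _ _) (by rw [hvS _ hv2, h0])
  · exact h3 (v + 3) _ ((SimpleGraph.mem_edgeSet _).mpr (adj_add v 3 (by decide)))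
      (Sym2.mem_mk_right _ _) (by rw [hvS _ hv3, h0])
  · exact h3 (v + 10) _ ((SimpleGraph.mem_edgeSet _).mpr (adj_add v 10 (by decide)))
      (Sym2.mem_mk_right _ _) (by rw [hvS _ hv4, h0])

theorem circulant_13_total_5_coloring_class_sizes
    (vc : ZMod 13 → Fin 5) (ec : Sym2 (ZMod 13) → Fin 5)
    (h : IsTotalColoring (circulantGraph 13) 5 vc ec) :
    ∃ j₀ : Fin 5, (Finset.univ.filter (fun v : ZMod 13 => vc v = j₀)).card = 1 ∧
      ∀ j : Fin 5, j ≠ j₀ → (Finset.univ.filter (fun v : ZMod 13 => vc v = j)).card = 3 := by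
  have h13 : ∀ c : Fin 5, (Finset.univ.filter (fun v : ZMod 13 => vc v = c)).card = 1 ∨
      (Finset.univ.filter (fun v : ZMod 13 => vc v = c)).card = 3 := by
    intro c
    have hodd := odd_class vc ec h c
    have hlt := class_lt5 vc ec h c
    rw [Nat.odd_iff] at hodd
    omega
  have hsum : ∑ c : Fin 5, (Finset.univ.filter (fun v : ZMod 13 => vc v = c)).card = 13 := by
    have := Finset.card_eq_sum_card_fiberwise
      (f := vc) (s := (Finset.univ : Finset (ZMod 13))) (t := (Finset.univ : Finset (Fin 5)))
      (fun x _ => Finset.mem_univ (vc x))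
    have hcu : (Finset.univ : Finset (ZMod 13)).card = 13 := by decide
    rw [hcu] at this
    exact this.symm
  have hsum' : (∑ c : Fin 5,
      (if (fun c => decide ((Finset.univ.filter (fun v : ZMod 13 => vc v = c)).card = 1)) c
        then 1 else 3)) = 13 := by
    calc (∑ c : Fin 5,
        (if (fun c => decide ((Finset.univ.filter (fun v : ZMod 13 => vc v = c)).card = 1)) c
          then 1 else 3))
        = ∑ c : Fin 5, (Finset.univ.filter (fun v : ZMod 13 => vc v = c)).card :=
          Finset.sum_congr rfl fun c _ => by rcases h13 c with hc | hc <;> simp [hc]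
      _ = 13 := hsum
  obtain ⟨j₀, hj₀, hj⟩ := bool5 _ hsum'
  refine ⟨j₀, ?_, ?_⟩
  · exact of_decide_eq_true hj₀
  · intro j hjne
    have := hj j hjne
    rcases h13 j with hc | hc
    · rw [decide_eq_false_iff_not] at this
      exact absurd hc this
    · exact hc
end

section
/- Suppose the circulant graph C_13(1,3) has a total 5-colouring σ, and let j_1, j_2 ∈ {1,2,3,4} be colours such that there exist indices i_1 and i_2 with σ(v_{i_1}) = σ(v_{i_1 + 5}) = j_1 and σ(v_{i_2}) = σ(v_{i_2 + 5}) = j_2 (indices modulo 13). Then the difference d²_{j_1, j_2} = (i_1 − i_2) mod 13 lies in {1, 3, 6, 7, 10, 12}; in particular it does not lie in {2, 4, 9, 11}. -/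
section helpers

variable (vc : ZMod 13 → Fin 5) (ec : Sym2 (ZMod 13) → Fin 5)

lemma fin5_cover : ∀ a b c d e x : Fin 5, a≠b→a≠c→a≠d→a≠e→b≠c→b≠d→b≠e→c≠d→c≠e→d≠e→
    (x=a∨x=b∨x=c∨x=d∨x=e) := by decide

lemma all13 : ∀ d : ZMod 13, d=0∨d=1∨d=2∨d=3∨d=4∨d=5∨d=6∨d=7∨d=8∨d=9∨d=10∨d=11∨d=12 := by
  decide

lemma adjd (v w : ZMod 13) (hpq : w - v = 1 ∨ w - v = 3 ∨ w - v = 10 ∨ w - v = 12) :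
    (circulantGraph 13).Adj v w := by
  have hne : v ≠ w := by
    rintro rfl
    simp only [sub_self] at hpq
    rcases hpq with hh|hh|hh|hh <;> exact absurd hh (by decide)
  simp only [circulantGraph, SimpleGraph.fromRel_adj]
  refine ⟨hne, ?_⟩
  rcases hpq with hh|hh|hh|hh
  · exact Or.inl (Or.inl hh)
  · exact Or.inl (Or.inr hh)
  · refine Or.inr (Or.inr ?_)
    have hv : v - w = -(w - v) := by ring
    rw [hv, hh]; decide
  · refine Or.inr (Or.inl ?_)
    have hv : v - w = -(w - v) := by ring
    rw [hv, hh]; decide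

lemma adjh (i p q : ZMod 13) (hpq : q - p = 1 ∨ q - p = 3 ∨ q - p = 10 ∨ q - p = 12) :
    (circulantGraph 13).Adj (i + p) (i + q) :=
  adjd _ _ (by rw [show i + q - (i + p) = q - p from by ring]; exact hpq)

lemma offne (i : ZMod 13) {p q : ZMod 13} (hpq : p ≠ q) : i + p ≠ i + q :=
  fun he => hpq (add_left_cancel he)

lemma addk (i a b c : ZMod 13) (h : a + b = c) : i + a + b = i + c := by rw [add_assoc, h]

lemma shift {i₁ i₂ c : ZMod 13} (hd : i₁ - i₂ = c) (p q : ZMod 13) (hpq : p - q = c) :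
    i₂ + p = i₁ + q := by
  have h0 : i₂ + p - (i₁ + q) = (p - q) - (i₁ - i₂) := by ring
  rw [hpq, hd, sub_self] at h0
  exact sub_eq_zero.1 h0

lemma swapE {c : Fin 5} {a b : ZMod 13} (h : ec s(a,b) = c) : ec s(b,a) = c := by
  rwa [Sym2.eq_swap] at h

lemma noclass (h : IsTotalColoring (circulantGraph 13) 5 vc ec) {c : Fin 5} (v w : ZMod 13) (hadj : (circulantGraph 13).Adj v w)
    (hw : vc w = c) : ec s(v, w) ≠ c := fun hec =>
  h.2.2 w s(v,w) ((circulantGraph 13).mem_edgeSet.2 hadj) (Sym2.mem_mk_right v w)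
    (hw.trans hec.symm)

lemma uniq' (h : IsTotalColoring (circulantGraph 13) 5 vc ec) {c : Fin 5} (v a b : ZMod 13) (hva : (circulantGraph 13).Adj v a)
    (hvb : (circulantGraph 13).Adj v b) (hab : a ≠ b)
    (h1 : ec s(v,a) = c) (h2 : ec s(v,b) = c) : False := by
  have hns : s(v,a) ≠ s(v,b) := fun he => hab (Sym2.congr_right.1 he)
  exact h.2.1 s(v,a) ((circulantGraph 13).mem_edgeSet.2 hva) s(v,b)
    ((circulantGraph 13).mem_edgeSet.2 hvb) hns
    ⟨v, Sym2.mem_mk_left v a, Sym2.mem_mk_left v b⟩ (h1.trans h2.symm)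

lemma pigeon (h : IsTotalColoring (circulantGraph 13) 5 vc ec) (v : ZMod 13) (c : Fin 5) (hc : vc v ≠ c) :
    ec s(v, v+1) = c ∨ ec s(v, v+12) = c ∨ ec s(v, v+3) = c ∨ ec s(v, v+10) = c := by
  have a1 : (circulantGraph 13).Adj v (v+1) := adjd v (v+1) (Or.inl (add_sub_cancel_left v 1))
  have a2 : (circulantGraph 13).Adj v (v+12) :=
    adjd v (v+12) (Or.inr (Or.inr (Or.inr (add_sub_cancel_left v 12))))
  have a3 : (circulantGraph 13).Adj v (v+3) :=
    adjd v (v+3) (Or.inr (Or.inl (add_sub_cancel_left v 3)))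
  have a4 : (circulantGraph 13).Adj v (v+10) :=
    adjd v (v+10) (Or.inr (Or.inr (Or.inl (add_sub_cancel_left v 10))))
  have m1 := (circulantGraph 13).mem_edgeSet.2 a1
  have m2 := (circulantGraph 13).mem_edgeSet.2 a2
  have m3 := (circulantGraph 13).mem_edgeSet.2 a3
  have m4 := (circulantGraph 13).mem_edgeSet.2 a4
  have e12 : s(v,v+1) ≠ s(v,v+12) :=
    fun he => absurd (add_left_cancel (Sym2.congr_right.1 he)) (by decide)
  have e13 : s(v,v+1) ≠ s(v,v+3) :=
    fun he => absurd (add_left_cancel (Sym2.congr_right.1 he)) (by decide)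
  have e14 : s(v,v+1) ≠ s(v,v+10) :=
    fun he => absurd (add_left_cancel (Sym2.congr_right.1 he)) (by decide)
  have e23 : s(v,v+12) ≠ s(v,v+3) :=
    fun he => absurd (add_left_cancel (Sym2.congr_right.1 he)) (by decide)
  have e24 : s(v,v+12) ≠ s(v,v+10) :=
    fun he => absurd (add_left_cancel (Sym2.congr_right.1 he)) (by decide)
  have e34 : s(v,v+3) ≠ s(v,v+10) :=
    fun he => absurd (add_left_cancel (Sym2.congr_right.1 he)) (by decide)
  have shared : ∀ a b : ZMod 13, ∃ u, u ∈ s(v,a) ∧ u ∈ s(v,b) :=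
    fun a b => ⟨v, Sym2.mem_mk_left v a, Sym2.mem_mk_left v b⟩
  have d12 := h.2.1 _ m1 _ m2 e12 (shared _ _)
  have d13 := h.2.1 _ m1 _ m3 e13 (shared _ _)
  have d14 := h.2.1 _ m1 _ m4 e14 (shared _ _)
  have d23 := h.2.1 _ m2 _ m3 e23 (shared _ _)
  have d24 := h.2.1 _ m2 _ m4 e24 (shared _ _)
  have d34 := h.2.1 _ m3 _ m4 e34 (shared _ _)
  have w1 := h.2.2 v _ m1 (Sym2.mem_mk_left v _)
  have w2 := h.2.2 v _ m2 (Sym2.mem_mk_left v _)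
  have w3 := h.2.2 v _ m3 (Sym2.mem_mk_left v _)
  have w4 := h.2.2 v _ m4 (Sym2.mem_mk_left v _)
  rcases fin5_cover (vc v) (ec s(v,v+1)) (ec s(v,v+12)) (ec s(v,v+3)) (ec s(v,v+10)) c
    w1 w2 w3 w4 d12 d13 d14 d23 d24 d34 with hh|hh|hh|hh|hh
  · exact absurd hh.symm hc
  · exact Or.inl hh.symm
  · exact Or.inr (Or.inl hh.symm)
  · exact Or.inr (Or.inr (Or.inl hh.symm))
  · exact Or.inr (Or.inr (Or.inr hh.symm))

end helpers

lemma forced (vc : ZMod 13 → Fin 5) (ec : Sym2 (ZMod 13) → Fin 5)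
    (h : IsTotalColoring (circulantGraph 13) 5 vc ec) (j : Fin 5) (i x : ZMod 13)
    (h0 : vc i = j) (h5 : vc (i+5) = j) (hxj : vc x = j)
    (hother : ∀ v, vc v = j → v = i ∨ v = i + 5 ∨ v = x)
    (ht : x = i + 7 ∨ x = i + 9 ∨ x = i + 11) :
    ec s(i+1, i+4) = j ∧ ec s(i+2, i+12) = j ∧ ec s(i+3, i+6) = j := by
  rcases ht with rfl | rfl | rfl
  · have hn : ∀ k : ZMod 13, k ≠ 0 → k ≠ 5 → k ≠ 7 → vc (i+k) ≠ j := by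
      intro k hk0 hk5 hkt hh
      rcases hother _ hh with e|e|e
      · exact hk0 (by rwa [add_eq_left] at e)
      · exact hk5 (add_left_cancel e)
      · exact hkt (add_left_cancel e)
    have P4 : ec s(i+4, i+3) = j ∨ ec s(i+4, i+1) = j := by
      have hp := pigeon vc ec h (i+4) j (hn 4 (by decide) (by decide) (by decide))
      rw [addk i 4 1 5 (by decide), addk i 4 12 3 (by decide), addk i 4 3 7 (by decide), addk i 4 10 1 (by decide)] at hp
      rcases hp with hp|hp|hp|hp
      · exact absurd hp (noclass vc ec h (i+4) (i+5) (adjh i 4 5 (by decide)) h5)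
      · exact Or.inl hp
      · exact absurd hp (noclass vc ec h (i+4) (i+7) (adjh i 4 7 (by decide)) hxj)
      · exact Or.inr hp
    have P2 : ec s(i+2, i+3) = j ∨ ec s(i+2, i+1) = j ∨ ec s(i+2, i+12) = j := by
      have hp := pigeon vc ec h (i+2) j (hn 2 (by decide) (by decide) (by decide))
      rw [addk i 2 1 3 (by decide), addk i 2 12 1 (by decide), addk i 2 3 5 (by decide), addk i 2 10 12 (by decide)] at hp
      rcases hp with hp|hp|hp|hp
      · exact Or.inl hp
      · exact Or.inr (Or.inl hp)
      · exact absurd hp (noclass vc ec h (i+2) (i+5) (adjh i 2 5 (by decide)) h5)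
      · exact Or.inr (Or.inr hp)
    have P3 : ec s(i+3, i+4) = j ∨ ec s(i+3, i+2) = j ∨ ec s(i+3, i+6) = j := by
      have hp := pigeon vc ec h (i+3) j (hn 3 (by decide) (by decide) (by decide))
      rw [addk i 3 1 4 (by decide), addk i 3 12 2 (by decide), addk i 3 3 6 (by decide), addk i 3 10 0 (by decide), add_zero] at hp
      rcases hp with hp|hp|hp|hp
      · exact Or.inl hp
      · exact Or.inr (Or.inl hp)
      · exact Or.inr (Or.inr hp)
      · exact absurd hp (noclass vc ec h (i+3) i (by have hx0 := adjh i 3 0 (by decide); rwa [add_zero] at hx0) h0)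
    have P6 : ec s(i+6, i+9) = j ∨ ec s(i+6, i+3) = j := by
      have hp := pigeon vc ec h (i+6) j (hn 6 (by decide) (by decide) (by decide))
      rw [addk i 6 1 7 (by decide), addk i 6 12 5 (by decide), addk i 6 3 9 (by decide), addk i 6 10 3 (by decide)] at hp
      rcases hp with hp|hp|hp|hp
      · exact absurd hp (noclass vc ec h (i+6) (i+7) (adjh i 6 7 (by decide)) hxj)
      · exact absurd hp (noclass vc ec h (i+6) (i+5) (adjh i 6 5 (by decide)) h5)
      · exact Or.inl hp
      · exact Or.inr hp
    have P8 : ec s(i+8, i+9) = j ∨ ec s(i+8, i+11) = j := by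
      have hp := pigeon vc ec h (i+8) j (hn 8 (by decide) (by decide) (by decide))
      rw [addk i 8 1 9 (by decide), addk i 8 12 7 (by decide), addk i 8 3 11 (by decide), addk i 8 10 5 (by decide)] at hp
      rcases hp with hp|hp|hp|hp
      · exact Or.inl hp
      · exact absurd hp (noclass vc ec h (i+8) (i+7) (adjh i 8 7 (by decide)) hxj)
      · exact Or.inr hp
      · exact absurd hp (noclass vc ec h (i+8) (i+5) (adjh i 8 5 (by decide)) h5)
    have P10 : ec s(i+10, i+11) = j ∨ ec s(i+10, i+9) = j := by
      have hp := pigeon vc ec h (i+10) j (hn 10 (by decide) (by decide) (by decide))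
      rw [addk i 10 1 11 (by decide), addk i 10 12 9 (by decide), addk i 10 3 0 (by decide), addk i 10 10 7 (by decide), add_zero] at hp
      rcases hp with hp|hp|hp|hp
      · exact Or.inl hp
      · exact Or.inr hp
      · exact absurd hp (noclass vc ec h (i+10) i (by have hx0 := adjh i 10 0 (by decide); rwa [add_zero] at hx0) h0)
      · exact absurd hp (noclass vc ec h (i+10) (i+7) (adjh i 10 7 (by decide)) hxj)
    have K : ec s(i+6, i+9) = j → False := by
      intro h69
      rcases P8 with h89 | h811
      · exact uniq' vc ec h (i+9) (i+6) (i+8) (adjh i 9 6 (by decide)) (adjh i 9 8 (by decide)) (offne i (by decide)) (swapE ec h69) (swapE ec h89)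
      · rcases P10 with h1011 | h109
        · exact uniq' vc ec h (i+11) (i+10) (i+8) (adjh i 11 10 (by decide)) (adjh i 11 8 (by decide)) (offne i (by decide)) (swapE ec h1011) (swapE ec h811)
        · exact uniq' vc ec h (i+9) (i+10) (i+6) (adjh i 9 10 (by decide)) (adjh i 9 6 (by decide)) (offne i (by decide)) (swapE ec h109) (swapE ec h69)
    have E41 : ec s(i+4, i+1) = j := by
      rcases P4 with h43 | h41
      · exfalso
        rcases P6 with h69 | h63
        · exact K h69
        · exact uniq' vc ec h (i+3) (i+4) (i+6) (adjh i 3 4 (by decide)) (adjh i 3 6 (by decide)) (offne i (by decide)) (swapE ec h43) (swapE ec h63)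
      · exact h41
    have E212 : ec s(i+2, i+12) = j := by
      rcases P2 with h23 | h21 | h212
      · exfalso
        rcases P6 with h69 | h63
        · exact K h69
        · exact uniq' vc ec h (i+3) (i+2) (i+6) (adjh i 3 2 (by decide)) (adjh i 3 6 (by decide)) (offne i (by decide)) (swapE ec h23) (swapE ec h63)
      · exfalso
        exact uniq' vc ec h (i+1) (i+2) (i+4) (adjh i 1 2 (by decide)) (adjh i 1 4 (by decide)) (offne i (by decide)) (swapE ec h21) (swapE ec E41)
      · exact h212
    have E36 : ec s(i+3, i+6) = j := by
      rcases P3 with h34 | h32 | h36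
      · exfalso
        exact uniq' vc ec h (i+4) (i+3) (i+1) (adjh i 4 3 (by decide)) (adjh i 4 1 (by decide)) (offne i (by decide)) (swapE ec h34) E41
      · exfalso
        exact uniq' vc ec h (i+2) (i+3) (i+12) (adjh i 2 3 (by decide)) (adjh i 2 12 (by decide)) (offne i (by decide)) (swapE ec h32) E212
      · exact h36
    exact ⟨swapE ec E41, E212, E36⟩
  · have hn : ∀ k : ZMod 13, k ≠ 0 → k ≠ 5 → k ≠ 9 → vc (i+k) ≠ j := by
      intro k hk0 hk5 hkt hh
      rcases hother _ hh with e|e|e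
      · exact hk0 (by rwa [add_eq_left] at e)
      · exact hk5 (add_left_cancel e)
      · exact hkt (add_left_cancel e)
    have P2 : ec s(i+2, i+3) = j ∨ ec s(i+2, i+1) = j ∨ ec s(i+2, i+12) = j := by
      have hp := pigeon vc ec h (i+2) j (hn 2 (by decide) (by decide) (by decide))
      rw [addk i 2 1 3 (by decide), addk i 2 12 1 (by decide), addk i 2 3 5 (by decide), addk i 2 10 12 (by decide)] at hp
      rcases hp with hp|hp|hp|hp
      · exact Or.inl hp
      · exact Or.inr (Or.inl hp)
      · exact absurd hp (noclass vc ec h (i+2) (i+5) (adjh i 2 5 (by decide)) h5)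
      · exact Or.inr (Or.inr hp)
    have P4 : ec s(i+4, i+3) = j ∨ ec s(i+4, i+7) = j ∨ ec s(i+4, i+1) = j := by
      have hp := pigeon vc ec h (i+4) j (hn 4 (by decide) (by decide) (by decide))
      rw [addk i 4 1 5 (by decide), addk i 4 12 3 (by decide), addk i 4 3 7 (by decide), addk i 4 10 1 (by decide)] at hp
      rcases hp with hp|hp|hp|hp
      · exact absurd hp (noclass vc ec h (i+4) (i+5) (adjh i 4 5 (by decide)) h5)
      · exact Or.inl hp
      · exact Or.inr (Or.inl hp)
      · exact Or.inr (Or.inr hp)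
    have P6 : ec s(i+6, i+7) = j ∨ ec s(i+6, i+3) = j := by
      have hp := pigeon vc ec h (i+6) j (hn 6 (by decide) (by decide) (by decide))
      rw [addk i 6 1 7 (by decide), addk i 6 12 5 (by decide), addk i 6 3 9 (by decide), addk i 6 10 3 (by decide)] at hp
      rcases hp with hp|hp|hp|hp
      · exact Or.inl hp
      · exact absurd hp (noclass vc ec h (i+6) (i+5) (adjh i 6 5 (by decide)) h5)
      · exact absurd hp (noclass vc ec h (i+6) (i+9) (adjh i 6 9 (by decide)) hxj)
      · exact Or.inr hp
    have P8 : ec s(i+8, i+7) = j ∨ ec s(i+8, i+11) = j := by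
      have hp := pigeon vc ec h (i+8) j (hn 8 (by decide) (by decide) (by decide))
      rw [addk i 8 1 9 (by decide), addk i 8 12 7 (by decide), addk i 8 3 11 (by decide), addk i 8 10 5 (by decide)] at hp
      rcases hp with hp|hp|hp|hp
      · exact absurd hp (noclass vc ec h (i+8) (i+9) (adjh i 8 9 (by decide)) hxj)
      · exact Or.inl hp
      · exact Or.inr hp
      · exact absurd hp (noclass vc ec h (i+8) (i+5) (adjh i 8 5 (by decide)) h5)
    have P10 : ec s(i+10, i+11) = j ∨ ec s(i+10, i+7) = j := by
      have hp := pigeon vc ec h (i+10) j (hn 10 (by decide) (by decide) (by decide))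
      rw [addk i 10 1 11 (by decide), addk i 10 12 9 (by decide), addk i 10 3 0 (by decide), addk i 10 10 7 (by decide), add_zero] at hp
      rcases hp with hp|hp|hp|hp
      · exact Or.inl hp
      · exact absurd hp (noclass vc ec h (i+10) (i+9) (adjh i 10 9 (by decide)) hxj)
      · exact absurd hp (noclass vc ec h (i+10) i (by have hx0 := adjh i 10 0 (by decide); rwa [add_zero] at hx0) h0)
      · exact Or.inr hp
    have H7 : ec s(i+8, i+7) = j ∨ ec s(i+10, i+7) = j := by
      rcases P8 with h87 | h811
      · exact Or.inl h87
      · rcases P10 with h1011 | h107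
        · exfalso
          exact uniq' vc ec h (i+11) (i+10) (i+8) (adjh i 11 10 (by decide)) (adjh i 11 8 (by decide)) (offne i (by decide)) (swapE ec h1011) (swapE ec h811)
        · exact Or.inr h107
    have E63 : ec s(i+6, i+3) = j := by
      rcases P6 with h67 | h63
      · exfalso
        rcases H7 with h87 | h107
        · exact uniq' vc ec h (i+7) (i+6) (i+8) (adjh i 7 6 (by decide)) (adjh i 7 8 (by decide)) (offne i (by decide)) (swapE ec h67) (swapE ec h87)
        · exact uniq' vc ec h (i+7) (i+6) (i+10) (adjh i 7 6 (by decide)) (adjh i 7 10 (by decide)) (offne i (by decide)) (swapE ec h67) (swapE ec h107)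
      · exact h63
    have E41 : ec s(i+4, i+1) = j := by
      rcases P4 with h43 | h47 | h41
      · exfalso
        exact uniq' vc ec h (i+3) (i+4) (i+6) (adjh i 3 4 (by decide)) (adjh i 3 6 (by decide)) (offne i (by decide)) (swapE ec h43) (swapE ec E63)
      · exfalso
        rcases H7 with h87 | h107
        · exact uniq' vc ec h (i+7) (i+4) (i+8) (adjh i 7 4 (by decide)) (adjh i 7 8 (by decide)) (offne i (by decide)) (swapE ec h47) (swapE ec h87)
        · exact uniq' vc ec h (i+7) (i+4) (i+10) (adjh i 7 4 (by decide)) (adjh i 7 10 (by decide)) (offne i (by decide)) (swapE ec h47) (swapE ec h107)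
      · exact h41
    have E212 : ec s(i+2, i+12) = j := by
      rcases P2 with h23 | h21 | h212
      · exfalso
        exact uniq' vc ec h (i+3) (i+2) (i+6) (adjh i 3 2 (by decide)) (adjh i 3 6 (by decide)) (offne i (by decide)) (swapE ec h23) (swapE ec E63)
      · exfalso
        exact uniq' vc ec h (i+1) (i+2) (i+4) (adjh i 1 2 (by decide)) (adjh i 1 4 (by decide)) (offne i (by decide)) (swapE ec h21) (swapE ec E41)
      · exact h212
    exact ⟨swapE ec E41, E212, swapE ec E63⟩
  · have hn : ∀ k : ZMod 13, k ≠ 0 → k ≠ 5 → k ≠ 11 → vc (i+k) ≠ j := by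
      intro k hk0 hk5 hkt hh
      rcases hother _ hh with e|e|e
      · exact hk0 (by rwa [add_eq_left] at e)
      · exact hk5 (add_left_cancel e)
      · exact hkt (add_left_cancel e)
    have P1 : ec s(i+1, i+2) = j ∨ ec s(i+1, i+4) = j := by
      have hp := pigeon vc ec h (i+1) j (hn 1 (by decide) (by decide) (by decide))
      rw [addk i 1 1 2 (by decide), addk i 1 12 0 (by decide), addk i 1 3 4 (by decide), addk i 1 10 11 (by decide), add_zero] at hp
      rcases hp with hp|hp|hp|hp
      · exact Or.inl hp
      · exact absurd hp (noclass vc ec h (i+1) i (by have hx0 := adjh i 1 0 (by decide); rwa [add_zero] at hx0) h0)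
      · exact Or.inr hp
      · exact absurd hp (noclass vc ec h (i+1) (i+11) (adjh i 1 11 (by decide)) hxj)
    have P2 : ec s(i+2, i+3) = j ∨ ec s(i+2, i+1) = j ∨ ec s(i+2, i+12) = j := by
      have hp := pigeon vc ec h (i+2) j (hn 2 (by decide) (by decide) (by decide))
      rw [addk i 2 1 3 (by decide), addk i 2 12 1 (by decide), addk i 2 3 5 (by decide), addk i 2 10 12 (by decide)] at hp
      rcases hp with hp|hp|hp|hp
      · exact Or.inl hp
      · exact Or.inr (Or.inl hp)
      · exact absurd hp (noclass vc ec h (i+2) (i+5) (adjh i 2 5 (by decide)) h5)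
      · exact Or.inr (Or.inr hp)
    have P3 : ec s(i+3, i+4) = j ∨ ec s(i+3, i+2) = j ∨ ec s(i+3, i+6) = j := by
      have hp := pigeon vc ec h (i+3) j (hn 3 (by decide) (by decide) (by decide))
      rw [addk i 3 1 4 (by decide), addk i 3 12 2 (by decide), addk i 3 3 6 (by decide), addk i 3 10 0 (by decide), add_zero] at hp
      rcases hp with hp|hp|hp|hp
      · exact Or.inl hp
      · exact Or.inr (Or.inl hp)
      · exact Or.inr (Or.inr hp)
      · exact absurd hp (noclass vc ec h (i+3) i (by have hx0 := adjh i 3 0 (by decide); rwa [add_zero] at hx0) h0)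
    have P4 : ec s(i+4, i+3) = j ∨ ec s(i+4, i+7) = j ∨ ec s(i+4, i+1) = j := by
      have hp := pigeon vc ec h (i+4) j (hn 4 (by decide) (by decide) (by decide))
      rw [addk i 4 1 5 (by decide), addk i 4 12 3 (by decide), addk i 4 3 7 (by decide), addk i 4 10 1 (by decide)] at hp
      rcases hp with hp|hp|hp|hp
      · exact absurd hp (noclass vc ec h (i+4) (i+5) (adjh i 4 5 (by decide)) h5)
      · exact Or.inl hp
      · exact Or.inr (Or.inl hp)
      · exact Or.inr (Or.inr hp)
    have P6 : ec s(i+6, i+7) = j ∨ ec s(i+6, i+9) = j ∨ ec s(i+6, i+3) = j := by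
      have hp := pigeon vc ec h (i+6) j (hn 6 (by decide) (by decide) (by decide))
      rw [addk i 6 1 7 (by decide), addk i 6 12 5 (by decide), addk i 6 3 9 (by decide), addk i 6 10 3 (by decide)] at hp
      rcases hp with hp|hp|hp|hp
      · exact Or.inl hp
      · exact absurd hp (noclass vc ec h (i+6) (i+5) (adjh i 6 5 (by decide)) h5)
      · exact Or.inr (Or.inl hp)
      · exact Or.inr (Or.inr hp)
    have P10 : ec s(i+10, i+9) = j ∨ ec s(i+10, i+7) = j := by
      have hp := pigeon vc ec h (i+10) j (hn 10 (by decide) (by decide) (by decide))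
      rw [addk i 10 1 11 (by decide), addk i 10 12 9 (by decide), addk i 10 3 0 (by decide), addk i 10 10 7 (by decide), add_zero] at hp
      rcases hp with hp|hp|hp|hp
      · exact absurd hp (noclass vc ec h (i+10) (i+11) (adjh i 10 11 (by decide)) hxj)
      · exact Or.inl hp
      · exact absurd hp (noclass vc ec h (i+10) i (by have hx0 := adjh i 10 0 (by decide); rwa [add_zero] at hx0) h0)
      · exact Or.inr hp
    have P12 : ec s(i+12, i+2) = j ∨ ec s(i+12, i+9) = j := by
      have hp := pigeon vc ec h (i+12) j (hn 12 (by decide) (by decide) (by decide))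
      rw [addk i 12 1 0 (by decide), addk i 12 12 11 (by decide), addk i 12 3 2 (by decide), addk i 12 10 9 (by decide), add_zero] at hp
      rcases hp with hp|hp|hp|hp
      · exact absurd hp (noclass vc ec h (i+12) i (by have hx0 := adjh i 12 0 (by decide); rwa [add_zero] at hx0) h0)
      · exact absurd hp (noclass vc ec h (i+12) (i+11) (adjh i 12 11 (by decide)) hxj)
      · exact Or.inl hp
      · exact Or.inr hp
    have E14 : ec s(i+1, i+4) = j := by
      rcases P1 with h12 | h14
      · exfalso
        rcases P12 with h122 | h129
        · exact uniq' vc ec h (i+2) (i+1) (i+12) (adjh i 2 1 (by decide)) (adjh i 2 12 (by decide)) (offne i (by decide)) (swapE ec h12) (swapE ec h122)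
        · rcases P10 with h109 | h107
          · exact uniq' vc ec h (i+9) (i+10) (i+12) (adjh i 9 10 (by decide)) (adjh i 9 12 (by decide)) (offne i (by decide)) (swapE ec h109) (swapE ec h129)
          · rcases P4 with h43 | h47 | h41
            · rcases P6 with h67 | h69 | h63
              · exact uniq' vc ec h (i+7) (i+6) (i+10) (adjh i 7 6 (by decide)) (adjh i 7 10 (by decide)) (offne i (by decide)) (swapE ec h67) (swapE ec h107)
              · exact uniq' vc ec h (i+9) (i+6) (i+12) (adjh i 9 6 (by decide)) (adjh i 9 12 (by decide)) (offne i (by decide)) (swapE ec h69) (swapE ec h129)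
              · exact uniq' vc ec h (i+3) (i+4) (i+6) (adjh i 3 4 (by decide)) (adjh i 3 6 (by decide)) (offne i (by decide)) (swapE ec h43) (swapE ec h63)
            · exact uniq' vc ec h (i+7) (i+4) (i+10) (adjh i 7 4 (by decide)) (adjh i 7 10 (by decide)) (offne i (by decide)) (swapE ec h47) (swapE ec h107)
            · exact uniq' vc ec h (i+1) (i+2) (i+4) (adjh i 1 2 (by decide)) (adjh i 1 4 (by decide)) (offne i (by decide)) h12 (swapE ec h41)
      · exact h14
    have E212 : ec s(i+2, i+12) = j := by
      rcases P2 with h23 | h21 | h212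
      · exfalso
        rcases P12 with h122 | h129
        · exact uniq' vc ec h (i+2) (i+3) (i+12) (adjh i 2 3 (by decide)) (adjh i 2 12 (by decide)) (offne i (by decide)) h23 (swapE ec h122)
        · rcases P6 with h67 | h69 | h63
          · rcases P10 with h109 | h107
            · exact uniq' vc ec h (i+9) (i+10) (i+12) (adjh i 9 10 (by decide)) (adjh i 9 12 (by decide)) (offne i (by decide)) (swapE ec h109) (swapE ec h129)
            · exact uniq' vc ec h (i+7) (i+6) (i+10) (adjh i 7 6 (by decide)) (adjh i 7 10 (by decide)) (offne i (by decide)) (swapE ec h67) (swapE ec h107)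
          · exact uniq' vc ec h (i+9) (i+6) (i+12) (adjh i 9 6 (by decide)) (adjh i 9 12 (by decide)) (offne i (by decide)) (swapE ec h69) (swapE ec h129)
          · exact uniq' vc ec h (i+3) (i+2) (i+6) (adjh i 3 2 (by decide)) (adjh i 3 6 (by decide)) (offne i (by decide)) (swapE ec h23) (swapE ec h63)
      · exfalso
        exact uniq' vc ec h (i+1) (i+2) (i+4) (adjh i 1 2 (by decide)) (adjh i 1 4 (by decide)) (offne i (by decide)) (swapE ec h21) E14
      · exact h212
    have E36 : ec s(i+3, i+6) = j := by
      rcases P3 with h34 | h32 | h36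
      · exfalso
        exact uniq' vc ec h (i+4) (i+3) (i+1) (adjh i 4 3 (by decide)) (adjh i 4 1 (by decide)) (offne i (by decide)) (swapE ec h34) (swapE ec E14)
      · exfalso
        exact uniq' vc ec h (i+2) (i+3) (i+12) (adjh i 2 3 (by decide)) (adjh i 2 12 (by decide)) (offne i (by decide)) (swapE ec h32) E212
      · exact h36
    exact ⟨E14, E212, E36⟩


lemma classThird (vc : ZMod 13 → Fin 5) (j : Fin 5) (i : ZMod 13)
    (hcard : (Finset.univ.filter (fun v : ZMod 13 => vc v = j)).card = 3)
    (h0 : vc i = j) (h5 : vc (i+5) = j) :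
    ∃ x, vc x = j ∧ x ≠ i ∧ x ≠ i + 5 ∧ ∀ v, vc v = j → v = i ∨ v = i + 5 ∨ v = x := by
  set S := Finset.univ.filter (fun v : ZMod 13 => vc v = j) with hS
  have hiS : i ∈ S := by simp [hS, h0]
  have hi5S : i + 5 ∈ S := by simp [hS, h5]
  have hne : i ≠ i + 5 := fun he => absurd (left_eq_add.1 he) (by decide)
  have hsub : ({i, i+5} : Finset (ZMod 13)) ⊆ S := by
    intro v hv
    rcases Finset.mem_insert.1 hv with rfl | hv
    · exact hiS
    · rw [Finset.mem_singleton.1 hv]; exact hi5S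
  have hcard2 : ({i, i+5} : Finset (ZMod 13)).card = 2 := by
    rw [Finset.card_insert_of_notMem (by simp [hne]), Finset.card_singleton]
  have h1 : (S \ {i, i+5}).card = 1 := by
    rw [Finset.card_sdiff_of_subset hsub, hcard, hcard2]
  obtain ⟨x, hx⟩ := Finset.card_eq_one.1 h1
  have hxmem : x ∈ S \ ({i, i+5} : Finset (ZMod 13)) := by
    rw [hx]; exact Finset.mem_singleton_self x
  have hxS : x ∈ S := (Finset.mem_sdiff.1 hxmem).1
  have hxn : x ∉ ({i, i+5} : Finset (ZMod 13)) := (Finset.mem_sdiff.1 hxmem).2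
  refine ⟨x, by simpa [hS] using hxS, fun he => hxn (by simp [he]),
    fun he => hxn (by simp [he]), ?_⟩
  intro v hv
  have hvS : v ∈ S := by simp [hS, hv]
  by_cases hvi : v = i
  · exact Or.inl hvi
  by_cases hvi5 : v = i + 5
  · exact Or.inr (Or.inl hvi5)
  refine Or.inr (Or.inr ?_)
  have hmem : v ∈ S \ ({i, i+5} : Finset (ZMod 13)) :=
    Finset.mem_sdiff.2 ⟨hvS, by simp [hvi, hvi5]⟩
  rw [hx] at hmem
  exact Finset.mem_singleton.1 hmem

lemma notAdjFacts {a b : ZMod 13} (hn : ¬ (circulantGraph 13).Adj a b) (hne : a ≠ b) :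
    b - a ≠ 1 ∧ b - a ≠ 3 ∧ a - b ≠ 1 ∧ a - b ≠ 3 := by
  simp only [circulantGraph, SimpleGraph.fromRel_adj] at hn
  refine ⟨?_, ?_, ?_, ?_⟩ <;> intro he
  · exact hn ⟨hne, Or.inl (Or.inl he)⟩
  · exact hn ⟨hne, Or.inl (Or.inr he)⟩
  · exact hn ⟨hne, Or.inr (Or.inl he)⟩
  · exact hn ⟨hne, Or.inr (Or.inr he)⟩

lemma third_offset (vc : ZMod 13 → Fin 5) (ec : Sym2 (ZMod 13) → Fin 5)
    (h : IsTotalColoring (circulantGraph 13) 5 vc ec) (j : Fin 5) (i x : ZMod 13)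
    (hij : vc i = j) (hi5 : vc (i+5) = j) (hxj : vc x = j)
    (hx0 : x ≠ i) (hx5 : x ≠ i + 5) : x = i + 7 ∨ x = i + 9 ∨ x = i + 11 := by
  have n1 : ¬ (circulantGraph 13).Adj x i :=
    fun ha => h.1 _ _ ha (hxj.trans hij.symm)
  have n2 : ¬ (circulantGraph 13).Adj x (i+5) :=
    fun ha => h.1 _ _ ha (hxj.trans hi5.symm)
  obtain ⟨f1, f2, f3, f4⟩ := notAdjFacts n1 hx0
  obtain ⟨g1, g2, g3, g4⟩ := notAdjFacts n2 hx5
  have hxeq : x = i + (x - i) := by ring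
  have hs5 : x - (i+5) = (x - i) - 5 := by ring
  have hs5' : (i+5) - x = 5 - (x - i) := by ring
  have hix : i - x = -(x - i) := by ring
  rcases all13 (x - i) with hd|hd|hd|hd|hd|hd|hd|hd|hd|hd|hd|hd|hd
  · exact absurd (sub_eq_zero.1 hd) hx0
  · exact absurd hd f3
  · exact absurd (by rw [hs5', hd]; decide : (i+5) - x = 3) g2
  · exact absurd hd f4
  · exact absurd (by rw [hs5', hd]; decide : (i+5) - x = 1) g1
  · exact absurd (by rw [hd] at hxeq; exact hxeq) hx5
  · exact absurd (by rw [hs5, hd]; decide : x - (i+5) = 1) g3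
  · exact Or.inl (by rw [hd] at hxeq; exact hxeq)
  · exact absurd (by rw [hs5, hd]; decide : x - (i+5) = 3) g4
  · exact Or.inr (Or.inl (by rw [hd] at hxeq; exact hxeq))
  · exact absurd (by rw [hix, hd]; decide : i - x = 3) f2
  · exact Or.inr (Or.inr (by rw [hd] at hxeq; exact hxeq))
  · exact absurd (by rw [hix, hd]; decide : i - x = 1) f1

theorem circulant_13_total_5_coloring_pair_distance
    (vc : ZMod 13 → Fin 5) (ec : Sym2 (ZMod 13) → Fin 5)
    (h : IsTotalColoring (circulantGraph 13) 5 vc ec)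
    (j₁ j₂ : Fin 5) (hne : j₁ ≠ j₂)
    (h₁ : (Finset.univ.filter (fun v : ZMod 13 => vc v = j₁)).card = 3)
    (h₂ : (Finset.univ.filter (fun v : ZMod 13 => vc v = j₂)).card = 3)
    (i₁ i₂ : ZMod 13)
    (hi₁ : vc i₁ = j₁ ∧ vc (i₁ + 5) = j₁)
    (hi₂ : vc i₂ = j₂ ∧ vc (i₂ + 5) = j₂) :
    i₁ - i₂ ∈ ({1, 3, 6, 7, 10, 12} : Set (ZMod 13)) ∧
      i₁ - i₂ ∉ ({2, 4, 9, 11} : Set (ZMod 13)) := by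
  obtain ⟨x₁, hx₁j, hx₁0, hx₁5, hoth₁⟩ := classThird vc j₁ i₁ h₁ hi₁.1 hi₁.2
  obtain ⟨x₂, hx₂j, hx₂0, hx₂5, hoth₂⟩ := classThird vc j₂ i₂ h₂ hi₂.1 hi₂.2
  have ht₁ := third_offset vc ec h j₁ i₁ x₁ hi₁.1 hi₁.2 hx₁j hx₁0 hx₁5
  have ht₂ := third_offset vc ec h j₂ i₂ x₂ hi₂.1 hi₂.2 hx₂j hx₂0 hx₂5
  have F₁ := forced vc ec h j₁ i₁ x₁ hi₁.1 hi₁.2 hx₁j hoth₁ ht₁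
  have F₂ := forced vc ec h j₂ i₂ x₂ hi₂.1 hi₂.2 hx₂j hoth₂ ht₂
  have good : ∀ c : ZMod 13, i₁ - i₂ = c →
      (c ∈ ({1, 3, 6, 7, 10, 12} : Set (ZMod 13))) →
      (c ∉ ({2, 4, 9, 11} : Set (ZMod 13))) →
      i₁ - i₂ ∈ ({1, 3, 6, 7, 10, 12} : Set (ZMod 13)) ∧
        i₁ - i₂ ∉ ({2, 4, 9, 11} : Set (ZMod 13)) := by
    intro c hc hm hn'
    rw [hc]
    exact ⟨hm, hn'⟩
  rcases all13 (i₁ - i₂) with hd|hd|hd|hd|hd|hd|hd|hd|hd|hd|hd|hd|hd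
  -- d = 0
  · exact absurd (by rw [← hi₁.1, sub_eq_zero.1 hd, hi₂.1]) hne
  -- d = 1
  · exact good 1 hd (by simp only [Set.mem_insert_iff, Set.mem_singleton_iff]; decide)
      (by simp only [Set.mem_insert_iff, Set.mem_singleton_iff]; decide)
  -- d = 2
  · exfalso
    have hA := F₁.2.1
    have hB := F₂.1
    rw [shift hd 1 12 (by decide), shift hd 4 2 (by decide)] at hB
    exact hne (hA.symm.trans (swapE ec hB))
  -- d = 3
  · exact good 3 hd (by simp only [Set.mem_insert_iff, Set.mem_singleton_iff]; decide)
      (by simp only [Set.mem_insert_iff, Set.mem_singleton_iff]; decide)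
  -- d = 4
  · exfalso
    have hA := F₁.2.1
    have hB := F₂.2.2
    rw [shift hd 3 12 (by decide), shift hd 6 2 (by decide)] at hB
    exact hne (hA.symm.trans (swapE ec hB))
  -- d = 5
  · exact absurd (by rw [← hi₁.1, show i₁ = i₂ + 5 from by rw [← hd]; ring, hi₂.2]) hne
  -- d = 6
  · exact good 6 hd (by simp only [Set.mem_insert_iff, Set.mem_singleton_iff]; decide)
      (by simp only [Set.mem_insert_iff, Set.mem_singleton_iff]; decide)
  -- d = 7
  · exact good 7 hd (by simp only [Set.mem_insert_iff, Set.mem_singleton_iff]; decide)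
      (by simp only [Set.mem_insert_iff, Set.mem_singleton_iff]; decide)
  -- d = 8
  · have he : i₂ = i₁ + 5 := by
      have := shift hd 0 5 (by decide)
      rwa [add_zero] at this
    exact absurd (by rw [← hi₁.2, ← he, hi₂.1]) hne
  -- d = 9
  · exfalso
    have hd' : i₂ - i₁ = 4 := by
      rw [show i₂ - i₁ = -(i₁ - i₂) from by ring, hd]; decide
    have hA := F₂.2.1
    have hB := F₁.2.2
    rw [shift hd' 3 12 (by decide), shift hd' 6 2 (by decide)] at hB
    exact hne ((swapE ec hB).symm.trans hA)
  -- d = 10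
  · exact good 10 hd (by simp only [Set.mem_insert_iff, Set.mem_singleton_iff]; decide)
      (by simp only [Set.mem_insert_iff, Set.mem_singleton_iff]; decide)
  -- d = 11
  · exfalso
    have hd' : i₂ - i₁ = 2 := by
      rw [show i₂ - i₁ = -(i₁ - i₂) from by ring, hd]; decide
    have hA := F₂.2.1
    have hB := F₁.1
    rw [shift hd' 1 12 (by decide), shift hd' 4 2 (by decide)] at hB
    exact hne ((swapE ec hB).symm.trans hA)
  -- d = 12
  · exact good 12 hd (by simp only [Set.mem_insert_iff, Set.mem_singleton_iff]; decide)
      (by simp only [Set.mem_insert_iff, Set.mem_singleton_iff]; decide)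
end

section
/- The maximum size of an independent set in the circulant graph C_13(1,3) is 5. -/
/-! If `s` is independent in `C_n(1,3)`, then `s` and `s + 1` are disjoint, so exactly
`n - 2 |s|` vertices `y` have `y ∉ s` and `y - 1 ∉ s`. For odd `n`, a set with `2 |s| = n - 1`
leaves exactly one such vertex `e`, and then every `x ∈ s` has `x + 2 ∈ s` unless `x + 2 = e`:
so `s = {e + 1, e + 3, …, e + n - 2}`, whose last element is `3` below its first. Hence
`2 |s| + 3 ≤ n`, which for `n = 13` is attained by `{0, 2, 4, 6, 8}`. -/

theorem ZMod.natCast_ne_zero_of_pos_of_lt {a n : ℕ} (h0 : 0 < a) (ha : a < n) :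
    (a : ZMod n) ≠ 0 := by
  rw [Ne, ZMod.natCast_eq_zero_iff]
  exact fun h => (Nat.le_of_dvd h0 h).not_gt ha

section DoubleGaps

variable {n : ℕ} [NeZero n] {s : Finset (ZMod n)}

def doubleGaps (s : Finset (ZMod n)) : Finset (ZMod n) :=
  (s ∪ s.image (· + 1))ᶜ

theorem mem_doubleGaps {y : ZMod n} : y ∈ doubleGaps s ↔ y ∉ s ∧ y - 1 ∉ s := by
  simp [doubleGaps, sub_eq_add_neg]

theorem two_mul_card_add_card_doubleGaps (hs : ∀ x ∈ s, x + 1 ∉ s) :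
    2 * s.card + (doubleGaps s).card = n := by
  have hdisj : Disjoint s (s.image (· + 1)) := by
    simp only [Finset.disjoint_right, Finset.mem_image]
    rintro _ ⟨x, hx, rfl⟩
    exact hs x hx
  have := Finset.card_add_card_compl (s ∪ s.image (· + 1))
  rw [ZMod.card, Finset.card_union_of_disjoint hdisj,
    Finset.card_image_of_injective _ (add_left_injective 1)] at this
  rw [doubleGaps]
  omega

theorem add_two_mul_add_one_mem_of_doubleGaps_eq_singleton (hs : ∀ x ∈ s, x + 1 ∉ s)
    {e : ZMod n} (he : doubleGaps s = {e}) (j : ℕ) (hj : 2 * j + 3 ≤ n) :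
    e + (2 * j + 1 : ℕ) ∈ s := by
  have hgap : ∀ y, y ∉ s → y - 1 ∉ s → y = e := fun y hy hy1 =>
    Finset.mem_singleton.1 (he ▸ mem_doubleGaps.2 ⟨hy, hy1⟩)
  have he_notMem : e ∉ s := (mem_doubleGaps.1 (he ▸ Finset.mem_singleton_self e)).1
  induction j with
  | zero =>
    by_contra h
    refine ZMod.natCast_ne_zero_of_pos_of_lt one_pos (by omega : 1 < n)
      ((add_eq_left (a := e)).1 ?_)
    exact hgap _ h (by simpa using he_notMem)
  | succ j ih =>
    set x := e + ((2 * j + 1 : ℕ) : ZMod n)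
    have hx2 : e + ((2 * (j + 1) + 1 : ℕ) : ZMod n) = x + 1 + 1 := by push_cast [x]; ring
    by_contra h
    refine ZMod.natCast_ne_zero_of_pos_of_lt (by omega : 0 < 2 * (j + 1) + 1)
      (by omega : 2 * (j + 1) + 1 < n) ((add_eq_left (a := e)).1 ?_)
    rw [hx2] at h ⊢
    exact hgap _ h (by simpa using hs x (ih (by omega)))

end DoubleGaps

namespace circulantGraph

variable {n : ℕ}

theorem adj_iff {v w : ZMod n} : (circulantGraph n).Adj v w ↔
    v ≠ w ∧ ((w - v = 1 ∨ w - v = 3) ∨ (v - w = 1 ∨ v - w = 3)) :=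
  SimpleGraph.fromRel_adj _ _ _

instance : DecidableRel (circulantGraph n).Adj := fun _ _ => decidable_of_iff' _ adj_iff

theorem adj_add {d : ZMod n} (hd : d = 1 ∨ d = 3) (h0 : d ≠ 0) (v : ZMod n) :
    (circulantGraph n).Adj v (v + d) :=
  adj_iff.2 ⟨by simpa using h0, Or.inl (by simpa using hd)⟩

theorem add_one_notMem_of_isIndepSet (hn : 1 < n) {s : Finset (ZMod n)}
    (hs : (circulantGraph n).IsIndepSet s) {x : ZMod n} (hx : x ∈ s) : x + 1 ∉ s := by
  have hadj := adj_add (Or.inl rfl) (by simpa using ZMod.natCast_ne_zero_of_pos_of_lt one_pos hn) x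
  exact fun hx1 => hs hx hx1 hadj.ne hadj

theorem two_mul_card_add_three_le_of_isIndepSet (hn : Odd n) (h5 : 5 ≤ n) {s : Finset (ZMod n)}
    (hs : (circulantGraph n).IsIndepSet s) : 2 * s.card + 3 ≤ n := by
  obtain ⟨k, rfl⟩ := hn
  have hs1 : ∀ x ∈ s, x + 1 ∉ s := fun _ => add_one_notMem_of_isIndepSet (by omega) hs
  have hcount := two_mul_card_add_card_doubleGaps hs1
  by_contra! hlt
  obtain ⟨e, he⟩ := Finset.card_eq_one.1 (by omega : (doubleGaps s).card = 1)
  have hmem := add_two_mul_add_one_mem_of_doubleGaps_eq_singleton hs1 he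
  obtain ⟨m, rfl⟩ : ∃ m, k = m + 2 := ⟨k - 2, by omega⟩
  have h3 : (3 : ZMod (2 * (m + 2) + 1)) ≠ 0 := by
    simpa using ZMod.natCast_ne_zero_of_pos_of_lt (by omega : 0 < 3)
      (by omega : 3 < 2 * (m + 2) + 1)
  have hadj : (circulantGraph _).Adj (e + ((2 * (m + 1) + 1 : ℕ) : ZMod _))
      (e + ((2 * 0 + 1 : ℕ) : ZMod _)) := by
    convert adj_add (Or.inr rfl) h3 _ using 1
    have := ZMod.natCast_self (2 * (m + 2) + 1)
    push_cast at this ⊢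
    linear_combination -this
  exact hs (hmem (m + 1) (by omega)) (hmem 0 (by omega)) hadj.ne hadj

end circulantGraph

theorem circulant_13_max_independent_set :
    IsGreatest {k : ℕ | ∃ s : Finset (ZMod 13),
      (∀ v ∈ s, ∀ w ∈ s, ¬ (circulantGraph 13).Adj v w) ∧ s.card = k} 5 := by
  refine ⟨⟨{0, 2, 4, 6, 8}, by decide, rfl⟩, ?_⟩
  rintro _ ⟨s, hs, rfl⟩
  have := circulantGraph.two_mul_card_add_three_le_of_isIndepSet (by decide) (by norm_num)
    (s := s) fun v hv w hw _ => hs v hv w hw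
  omega
end
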